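/- arXiv:2206.00347 — 14 statements merged into one kernel-verified Lean document; each statement's English description precedes it below -/
import Mathlib

section
/- Let L be a sublattice of ℝⁿ, Θ a partially ordered set, F : L × Θ → ℝ quasi-supermodular in x and with single-crossing differences in (x,θ), and C : ΔL → [0,∞] minimally monotone with C(0) < ∞. Fix θ̲ ≤ θ̄ in Θ and x̲ ∈ argmax_{x∈L} F(x,θ̲). Define G(x) = F(x,θ̄) − C(x−x̲). If argmax_{x∈L} G(x) is nonempty, then there exists x̂ ∈ argmax_{x∈L} G(x) with x̂ ≥ x̲. -/
noncomputable section

abbrev Vec (n : ℕ) := Fin n → ℝ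

/-- `L` is a sublattice of `ℝⁿ` (componentwise lattice operations). -/
def SublatticeSet {n : ℕ} (L : Set (Vec n)) : Prop :=
  ∀ ⦃x⦄, x ∈ L → ∀ ⦃y⦄, y ∈ L → x ⊔ y ∈ L ∧ x ⊓ y ∈ L

/-- `ΔL = {x - y : x, y ∈ L}`. -/
def DeltaSet {n : ℕ} (L : Set (Vec n)) : Set (Vec n) :=
  {e | ∃ x ∈ L, ∃ y ∈ L, e = x - y}

/-- `f` is quasi-supermodular on `L`. -/
def QSupermodOn {n : ℕ} (L : Set (Vec n)) (f : Vec n → ℝ) : Prop :=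
  ∀ ⦃x⦄, x ∈ L → ∀ ⦃y⦄, y ∈ L →
    (f (x ⊓ y) ≤ f x → f y ≤ f (x ⊔ y)) ∧ (f (x ⊓ y) < f x → f y < f (x ⊔ y))

/-- `F` has single-crossing differences in `(x, θ)` on `L`. -/
def SCDOn {n : ℕ} {Θ : Type*} [Preorder Θ] (L : Set (Vec n)) (F : Vec n → Θ → ℝ) : Prop :=
  ∀ ⦃x⦄, x ∈ L → ∀ ⦃y⦄, y ∈ L → x ≤ y → ∀ ⦃θ₁ θ₂ : Θ⦄, θ₁ ≤ θ₂ →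
    (F x θ₁ ≤ F y θ₁ → F x θ₂ ≤ F y θ₂) ∧ (F x θ₁ < F y θ₁ → F x θ₂ < F y θ₂)

/-- The cost `C` is minimally monotone on `ΔL`. -/
def MinMonoOn {n : ℕ} (L : Set (Vec n)) (C : Vec n → EReal) : Prop :=
  ∀ ⦃e⦄, e ∈ DeltaSet L → C (e ⊓ 0) ≤ C e ∧ C (e ⊔ 0) ≤ C e

/-- `e'` lies coordinatewise between `0` and `e`. -/
def BetweenZero {n : ℕ} (e' e : Vec n) : Prop :=
  ∀ i, (0 ≤ e' i ∧ e' i ≤ e i) ∨ (e i ≤ e' i ∧ e' i ≤ 0)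

/-- The cost `C` is monotone on `ΔL`. -/
def MonoCostOn {n : ℕ} (L : Set (Vec n)) (C : Vec n → EReal) : Prop :=
  ∀ ⦃e'⦄, e' ∈ DeltaSet L → ∀ ⦃e⦄, e ∈ DeltaSet L → BetweenZero e' e → C e' ≤ C e

/-- fundamental comparative statics, Theorem 1. -/
theorem basic_comparative_statics {n : ℕ} {Θ : Type*} [PartialOrder Θ]
    (L : Set (Vec n)) (hL : SublatticeSet L)
    (F : Vec n → Θ → ℝ) (C : Vec n → EReal)
    (hQS : ∀ θ : Θ, QSupermodOn L (fun x => F x θ))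
    (hSCD : SCDOn L F)
    (hC0 : ∀ e, 0 ≤ C e) (hCfin : C 0 < ⊤)
    (hCmm : MinMonoOn L C)
    (θlo θhi : Θ) (hθ : θlo ≤ θhi)
    (xlo : Vec n) (hxloL : xlo ∈ L) (hxlo : ∀ x ∈ L, F x θlo ≤ F xlo θlo)
    (hne : ∃ x ∈ L, ∀ y ∈ L,
      (F y θhi : EReal) - C (y - xlo) ≤ (F x θhi : EReal) - C (x - xlo)) :
    ∃ xhat ∈ L,
      (∀ y ∈ L,
        (F y θhi : EReal) - C (y - xlo) ≤ (F xhat θhi : EReal) - C (xhat - xlo)) ∧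
      xlo ≤ xhat := by
  obtain ⟨x, hxL, hxmax⟩ := hne
  have hjoin : x ⊔ xlo ∈ L := by rw [sup_comm]; exact (hL hxloL hxL).1
  -- key algebraic identity: (x ⊔ xlo) - xlo = (x - xlo) ⊔ 0
  have hsub : (x ⊔ xlo) - xlo = (x - xlo) ⊔ 0 := by
    funext i
    simp [Pi.sup_apply, Pi.sub_apply]
    rcases le_total (x i) (xlo i) with h | h
    · simp [sup_of_le_right h, sup_of_le_right (by linarith : x i - xlo i ≤ 0)]
    · simp [sup_of_le_left h, sup_of_le_left (by linarith : (0:ℝ) ≤ x i - xlo i)]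
  have hDelta : x - xlo ∈ DeltaSet L := ⟨x, hxL, xlo, hxloL, rfl⟩
  have hCle : C ((x ⊔ xlo) - xlo) ≤ C (x - xlo) := by
    rw [hsub]; exact (hCmm hDelta).2
  -- F (x ⊔ xlo) θhi ≥ F x θhi
  have hQ : F x θlo ≤ F (xlo ⊔ x) θlo := by
    have h1 : F (xlo ⊓ x) θlo ≤ F xlo θlo := hxlo _ (hL hxloL hxL).2
    exact ((hQS θlo) hxloL hxL).1 h1
  have hle : x ≤ x ⊔ xlo := le_sup_left
  have hF : F x θhi ≤ F (x ⊔ xlo) θhi := by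
    have := (hSCD hxL hjoin hle hθ).1
    rw [sup_comm xlo x] at hQ
    exact this hQ
  refine ⟨x ⊔ xlo, hjoin, fun y hy => ?_, le_sup_right⟩
  calc (F y θhi : EReal) - C (y - xlo) ≤ (F x θhi : EReal) - C (x - xlo) := hxmax y hy
    _ ≤ (F (x ⊔ xlo) θhi : EReal) - C ((x ⊔ xlo) - xlo) :=
        EReal.sub_le_sub (by exact_mod_cast hF) hCle
end
end

section
/- Let L̲, L̄ be sublattices of ℝⁿ with L̄ ≥_ss L̲ (strong set order), F : (L̲ ∪ L̄) × Θ → ℝ quasi-supermodular in x and with single-crossing differences in (x,θ), and C minimally monotone. Fix θ̲ ≤ θ̄ and x̲ ∈ argmax_{x∈L̲} F(x,θ̲). Define G(x) = F(x,θ̄) − C(x−x̲). If argmax_{x∈L̄} G(x) is nonempty, then there exists x̂ ∈ argmax_{x∈L̄} G(x) with x̂ ≥ x̲. -/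
noncomputable section

/-- `X ≥_ss Y`: strong set order. -/
def StrongSetOrderGE {n : ℕ} (X Y : Set (Vec n)) : Prop :=
  ∀ ⦃x⦄, x ∈ X → ∀ ⦃y⦄, y ∈ Y → x ⊔ y ∈ X ∧ x ⊓ y ∈ Y

/-- Theorem 1*: comparative statics with constraint-set shifts. -/
theorem comparative_statics_constraint_shift {n : ℕ} {Θ : Type*} [PartialOrder Θ]
    (Llo Lhi : Set (Vec n)) (hLlo : SublatticeSet Llo) (hLhi : SublatticeSet Lhi)
    (hss : StrongSetOrderGE Lhi Llo)
    (F : Vec n → Θ → ℝ) (C : Vec n → EReal)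
    (hQS : ∀ θ : Θ, QSupermodOn (Llo ∪ Lhi) (fun x => F x θ))
    (hSCD : SCDOn (Llo ∪ Lhi) F)
    (hC0 : ∀ e, 0 ≤ C e) (hCfin : C 0 < ⊤)
    (hCmm : MinMonoOn (Llo ∪ Lhi) C)
    (θlo θhi : Θ) (hθ : θlo ≤ θhi)
    (xlo : Vec n) (hxloL : xlo ∈ Llo) (hxlo : ∀ x ∈ Llo, F x θlo ≤ F xlo θlo)
    (hne : ∃ x ∈ Lhi, ∀ y ∈ Lhi,
      (F y θhi : EReal) - C (y - xlo) ≤ (F x θhi : EReal) - C (x - xlo)) :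
    ∃ xhat ∈ Lhi,
      (∀ y ∈ Lhi,
        (F y θhi : EReal) - C (y - xlo) ≤ (F xhat θhi : EReal) - C (xhat - xlo)) ∧
      xlo ≤ xhat := by
  obtain ⟨x, hxL, hxmax⟩ := hne
  set j := x ⊔ xlo with hj
  have hjL : j ∈ Lhi := (hss hxL hxloL).1
  have hmL : x ⊓ xlo ∈ Llo := (hss hxL hxloL).2
  have hxU : x ∈ Llo ∪ Lhi := Or.inr hxL
  have hxloU : xlo ∈ Llo ∪ Lhi := Or.inl hxloL
  have hjU : j ∈ Llo ∪ Lhi := Or.inr hjL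
  -- F x θlo ≤ F j θlo via quasi-supermodularity
  have h1 : F (xlo ⊓ x) θlo ≤ F xlo θlo := by
    have : xlo ⊓ x = x ⊓ xlo := inf_comm _ _
    rw [this]; exact hxlo _ hmL
  have h2 : F x θlo ≤ F (xlo ⊔ x) θlo := ((hQS θlo) hxloU hxU).1 h1
  have h3 : F x θlo ≤ F j θlo := by rwa [sup_comm] at h2
  -- SCD gives the inequality at θhi
  have h4 : F x θhi ≤ F j θhi := (hSCD hxU hjU le_sup_left hθ).1 h3
  -- cost comparison
  have hdelta : x - xlo ∈ DeltaSet (Llo ∪ Lhi) := ⟨x, hxU, xlo, hxloU, rfl⟩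
  have hCle : C (j - xlo) ≤ C (x - xlo) := by
    have hje : j - xlo = (x - xlo) ⊔ 0 := by
      funext i
      simp only [hj, Pi.sub_apply, Pi.sup_apply, Pi.zero_apply]
      rcases le_total (x i) (xlo i) with h | h
      · rw [sup_eq_right.mpr h, sup_eq_right.mpr (by linarith : x i - xlo i ≤ 0), sub_self]
      · rw [sup_eq_left.mpr h, sup_eq_left.mpr (by linarith : (0:ℝ) ≤ x i - xlo i)]
    rw [hje]
    exact (hCmm hdelta).2
  have hGj : (F x θhi : EReal) - C (x - xlo) ≤ (F j θhi : EReal) - C (j - xlo) :=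
    EReal.sub_le_sub (by exact_mod_cast h4) hCle
  exact ⟨j, hjL, fun y hy => (hxmax y hy).trans hGj, le_sup_right⟩
end
end

section
/- Let L be a sublattice of ℝⁿ, F quasi-supermodular in x with strict single-crossing differences in (x,θ), and C minimally monotone. Fix θ̲ < θ̄ and x̲ ∈ argmax_{x∈L} F(x,θ̲). Then every x̂ ∈ argmax_{x∈L} [F(x,θ̄) − C(x−x̲)] satisfies x̂ ≥ x̲. -/
noncomputable section

/-- `F` has strict single-crossing differences in `(x, θ)` on `L`. -/
def StrictSCDOn {n : ℕ} {Θ : Type*} [Preorder Θ] (L : Set (Vec n)) (F : Vec n → Θ → ℝ) : Prop :=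
  ∀ ⦃x⦄, x ∈ L → ∀ ⦃y⦄, y ∈ L → x ≤ y → x ≠ y → ∀ ⦃θ₁ θ₂ : Θ⦄, θ₁ < θ₂ →
    (F x θ₁ ≤ F y θ₁ → F x θ₂ < F y θ₂)

/-- Proposition 1(a): "for all" comparative statics via strict SCD. -/
theorem forall_comparative_statics_strict_scd {n : ℕ} {Θ : Type*} [PartialOrder Θ]
    (L : Set (Vec n)) (hL : SublatticeSet L)
    (F : Vec n → Θ → ℝ) (C : Vec n → EReal)
    (hQS : ∀ θ : Θ, QSupermodOn L (fun x => F x θ))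
    (hSCD : StrictSCDOn L F)
    (hC0 : ∀ e, 0 ≤ C e) (hCfin : C 0 < ⊤)
    (hCmm : MinMonoOn L C)
    (θlo θhi : Θ) (hθ : θlo < θhi)
    (xlo : Vec n) (hxloL : xlo ∈ L) (hxlo : ∀ x ∈ L, F x θlo ≤ F xlo θlo)
    (xhat : Vec n) (hxhatL : xhat ∈ L)
    (hxhat : ∀ y ∈ L,
      (F y θhi : EReal) - C (y - xlo) ≤ (F xhat θhi : EReal) - C (xhat - xlo)) :
    xlo ≤ xhat := by
  by_contra hle
  -- lattice elements
  obtain ⟨hsupL, hinfL⟩ := hL hxhatL hxloL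
  -- inf ≠ xlo
  have hne : xhat ⊓ xlo ≠ xlo := by
    intro h
    exact hle (inf_eq_right.mp h)
  have hinf_le : xhat ⊓ xlo ≤ xlo := inf_le_right
  -- optimality at θlo
  have h1 : F (xhat ⊓ xlo) θlo ≤ F xlo θlo := hxlo _ hinfL
  -- strict SCD
  have h2 : F (xhat ⊓ xlo) θhi < F xlo θhi :=
    hSCD hinfL hxloL hinf_le hne hθ h1
  -- quasi-supermodularity at θhi, x = xlo, y = xhat
  have h3 : F xhat θhi < F (xlo ⊔ xhat) θhi := by
    have := (hQS θhi hxloL hxhatL).2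
    simpa [inf_comm] using this (by simpa [inf_comm] using h2)
  have hsup_eq : xlo ⊔ xhat = xhat ⊔ xlo := sup_comm _ _
  rw [hsup_eq] at h3
  -- cost comparison
  have hΔ : xhat - xlo ∈ DeltaSet L := ⟨xhat, hxhatL, xlo, hxloL, rfl⟩
  have hkey : (xhat ⊔ xlo) - xlo = (xhat - xlo) ⊔ 0 := by
    funext i
    simp only [Pi.sub_apply, Pi.sup_apply, Pi.zero_apply]
    rcases le_total (xhat i) (xlo i) with h | h
    · rw [sup_eq_right.mpr h, sup_eq_right.mpr (sub_nonpos.mpr h), sub_self]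
    · rw [sup_eq_left.mpr h, sup_eq_left.mpr (sub_nonneg.mpr h)]
  have hcost : C ((xhat ⊔ xlo) - xlo) ≤ C (xhat - xlo) := by
    rw [hkey]; exact (hCmm hΔ).2
  -- C (xhat - xlo) is finite
  have hCtop : C (xhat - xlo) ≠ ⊤ := by
    intro htop
    have h := hxhat xlo hxloL
    rw [htop] at h
    simp only [sub_self] at h
    have hbot : (F xhat θhi : EReal) - ⊤ = ⊥ := by
      exact EReal.sub_top _
    rw [hbot] at h
    have hC0fin : C 0 ≠ ⊤ := hCfin.ne
    have hC0bot : C 0 ≠ ⊥ := fun hb => by simpa [hb] using hC0 0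
    have : (F xlo θhi : EReal) - C 0 = ((F xlo θhi - (C 0).toReal : ℝ) : EReal) := by
      rw [← EReal.coe_toReal hC0fin hC0bot]
      exact (EReal.coe_sub _ _).symm
    rw [this] at h
    exact (EReal.coe_ne_bot _) (le_bot_iff.mp h)
  have hCbot : C (xhat - xlo) ≠ ⊥ := fun hb => by simpa [hb] using hC0 (xhat - xlo)
  have hCbot' : C ((xhat ⊔ xlo) - xlo) ≠ ⊥ :=
    fun hb => by simpa [hb] using hC0 ((xhat ⊔ xlo) - xlo)
  have hCtop' : C ((xhat ⊔ xlo) - xlo) ≠ ⊤ := fun ht => hCtop (top_le_iff.mp (ht ▸ hcost))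
  -- set real values
  set c : ℝ := (C (xhat - xlo)).toReal with hc
  set c' : ℝ := (C ((xhat ⊔ xlo) - xlo)).toReal with hc'
  have hcEq : C (xhat - xlo) = (c : EReal) := (EReal.coe_toReal hCtop hCbot).symm
  have hc'Eq : C ((xhat ⊔ xlo) - xlo) = (c' : EReal) := (EReal.coe_toReal hCtop' hCbot').symm
  have hcc : c' ≤ c := by
    have := hcost
    rw [hcEq, hc'Eq] at this
    exact_mod_cast this
  have h := hxhat (xhat ⊔ xlo) hsupL
  rw [hcEq, hc'Eq, ← EReal.coe_sub, ← EReal.coe_sub] at h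
  have h' : F (xhat ⊔ xlo) θhi - c' ≤ F xhat θhi - c := by exact_mod_cast h
  clear hle
  linarith
end
end

section
/- Let L be a sublattice of ℝⁿ, F quasi-supermodular in x with single-crossing differences in (x,θ), and C strictly minimally monotone. Fix θ̲ < θ̄ and x̲ ∈ argmax_{x∈L} F(x,θ̲). Then every x̂ ∈ argmax_{x∈L} [F(x,θ̄) − C(x−x̲)] satisfies x̂ ≥ x̲. -/
noncomputable section

/-- The cost `C` is strictly minimally monotone on `ΔL`. -/
def StrictMinMonoOn {n : ℕ} (L : Set (Vec n)) (C : Vec n → EReal) : Prop :=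
  ∀ ⦃e⦄, e ∈ DeltaSet L →
    (¬ e ≤ 0 → C (e ⊓ 0) < C e) ∧ (¬ 0 ≤ e → C (e ⊔ 0) < C e)

/-- Proposition 1(b): "for all" comparative statics via strictly
minimally monotone costs. -/
theorem forall_comparative_statics_strict_cost {n : ℕ} {Θ : Type*} [PartialOrder Θ]
    (L : Set (Vec n)) (hL : SublatticeSet L)
    (F : Vec n → Θ → ℝ) (C : Vec n → EReal)
    (hQS : ∀ θ : Θ, QSupermodOn L (fun x => F x θ))
    (hSCD : SCDOn L F)
    (hC0 : ∀ e, 0 ≤ C e) (hCfin : C 0 < ⊤)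
    (hCsmm : StrictMinMonoOn L C)
    (θlo θhi : Θ) (hθ : θlo < θhi)
    (xlo : Vec n) (hxloL : xlo ∈ L) (hxlo : ∀ x ∈ L, F x θlo ≤ F xlo θlo)
    (xhat : Vec n) (hxhatL : xhat ∈ L)
    (hxhat : ∀ y ∈ L,
      (F y θhi : EReal) - C (y - xlo) ≤ (F xhat θhi : EReal) - C (xhat - xlo)) :
    xlo ≤ xhat := by
  by_contra hnot
  -- e = xhat - xlo, not 0 ≤ e
  set e := xhat - xlo with he
  have heD : e ∈ DeltaSet L := ⟨xhat, hxhatL, xlo, hxloL, rfl⟩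
  have hnot' : ¬ (0 : Vec n) ≤ e := by
    intro h
    exact hnot (fun i => by have := h i; simpa [he] using this)
  -- C e is finite
  have hCe_ne_top : C e ≠ ⊤ := by
    intro htop
    have h1 := hxhat xlo hxloL
    rw [sub_self] at h1
    rw [he] at htop
    rw [htop] at h1
    have hbot : (F xhat θhi : EReal) - ⊤ = ⊥ := by
      rw [sub_eq_add_neg, EReal.neg_top, EReal.add_bot]
    rw [hbot] at h1
    have hle : (F xlo θhi : EReal) - C 0 = ⊥ := le_bot_iff.mp h1
    have hC0top : C 0 ≠ ⊤ := hCfin.ne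
    have hC0bot : C 0 ≠ ⊥ := ne_of_gt (lt_of_lt_of_le (by simp) (hC0 0))
    lift C 0 to ℝ using ⟨hC0top, hC0bot⟩ with c
    rw [← EReal.coe_sub] at hle
    exact EReal.coe_ne_bot _ hle
  have hCe_ne_bot : C e ≠ ⊥ := ne_of_gt (lt_of_lt_of_le (by simp) (hC0 e))
  -- strict min mono
  have hstrict : C (e ⊔ 0) < C e := (hCsmm heD).2 hnot'
  have hCs_ne_top : C (e ⊔ 0) ≠ ⊤ := ne_top_of_lt hstrict
  have hCs_ne_bot : C (e ⊔ 0) ≠ ⊥ := ne_of_gt (lt_of_lt_of_le (by simp) (hC0 _))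
  -- y = xhat ⊔ xlo
  have hyL : xhat ⊔ xlo ∈ L := (hL hxhatL hxloL).1
  have hmL : xlo ⊓ xhat ∈ L := (hL hxloL hxhatL).2
  -- QS at θlo
  have hqs := (hQS θlo hxloL hxhatL).1
  have h2 : F xhat θlo ≤ F (xlo ⊔ xhat) θlo := hqs (hxlo _ hmL)
  rw [sup_comm] at h2
  -- SCD
  have h3 : F xhat θhi ≤ F (xhat ⊔ xlo) θhi :=
    (hSCD hxhatL hyL le_sup_left hθ.le).1 h2
  -- (xhat ⊔ xlo) - xlo = e ⊔ 0
  have hkey : (xhat ⊔ xlo) - xlo = e ⊔ 0 := by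
    funext i
    simp only [Pi.sub_apply, Pi.sup_apply, Pi.zero_apply, he]
    rw [← max_sub_sub_right, sub_self]
  -- optimality
  have h4 := hxhat _ hyL
  rw [hkey] at h4
  -- derive contradiction via reals
  lift C e to ℝ using ⟨hCe_ne_top, hCe_ne_bot⟩ with ce hce
  lift C (e ⊔ 0) to ℝ using ⟨hCs_ne_top, hCs_ne_bot⟩ with cs hcs
  rw [← EReal.coe_sub, ← EReal.coe_sub] at h4
  have h4' : F (xhat ⊔ xlo) θhi - cs ≤ F xhat θhi - ce := EReal.coe_le_coe_iff.mp h4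
  have hstrict' : cs < ce := EReal.coe_lt_coe_iff.mp hstrict
  clear hnot hnot' hxhat hxlo
  linarith
end
end

section
/- (le Chatelier principle, existence part) Let L be a sublattice of ℝⁿ, F quasi-supermodular in x with single-crossing differences in (x,θ), and C : ΔL → [0,∞] monotone with C(0) < ∞. Fix θ̲ ≤ θ̄, x̲ ∈ argmax_{x∈L} F(x,θ̲), and x̄ ∈ argmax_{x∈L} F(x,θ̄) with x̄ ≥ x̲. If argmax_{x∈L} [F(x,θ̄) − C(x−x̲)] is nonempty, then it contains an element x̂ with x̲ ≤ x̂ ≤ x̄. -/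
noncomputable section

/-- Theorem 2, le Chatelier principle: existence part. -/
theorem le_chatelier_exists {n : ℕ} {Θ : Type*} [PartialOrder Θ]
    (L : Set (Vec n)) (hL : SublatticeSet L)
    (F : Vec n → Θ → ℝ) (C : Vec n → EReal)
    (hQS : ∀ θ : Θ, QSupermodOn L (fun x => F x θ))
    (hSCD : SCDOn L F)
    (hC0 : ∀ e, 0 ≤ C e) (hCfin : C 0 < ⊤)
    (hCmono : MonoCostOn L C)
    (θlo θhi : Θ) (hθ : θlo ≤ θhi)
    (xlo : Vec n) (hxloL : xlo ∈ L) (hxlo : ∀ x ∈ L, F x θlo ≤ F xlo θlo)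
    (xbar : Vec n) (hxbarL : xbar ∈ L) (hxbar : ∀ x ∈ L, F x θhi ≤ F xbar θhi)
    (hle : xlo ≤ xbar)
    (hne : ∃ x ∈ L, ∀ y ∈ L,
      (F y θhi : EReal) - C (y - xlo) ≤ (F x θhi : EReal) - C (x - xlo)) :
    ∃ xhat ∈ L,
      (∀ y ∈ L,
        (F y θhi : EReal) - C (y - xlo) ≤ (F xhat θhi : EReal) - C (xhat - xlo)) ∧
      xlo ≤ xhat ∧ xhat ≤ xbar := by
  obtain ⟨x, hxL, hxmax⟩ := hne
  -- Step 1: x' = x ⊔ xlo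
  set x' : Vec n := x ⊔ xlo with hx'
  have hx'L : x' ∈ L := (hL hxL hxloL).1
  -- F(x, θhi) ≤ F(x', θhi)
  have hF1 : F x θhi ≤ F x' θhi := by
    have h0 : F (xlo ⊓ x) θlo ≤ F xlo θlo := hxlo _ (hL hxloL hxL).2
    have h1 : F x θlo ≤ F (xlo ⊔ x) θlo := ((hQS θlo) hxloL hxL).1 h0
    rw [sup_comm] at h1
    exact (hSCD hxL hx'L le_sup_left hθ).1 h1
  -- cost comparison for step 1
  have hdx : x - xlo ∈ DeltaSet L := ⟨x, hxL, xlo, hxloL, rfl⟩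
  have hdx' : x' - xlo ∈ DeltaSet L := ⟨x', hx'L, xlo, hxloL, rfl⟩
  have hbz1 : BetweenZero (x' - xlo) (x - xlo) := by
    intro i
    by_cases h : xlo i ≤ x i
    · left
      simp only [Pi.sub_apply, hx', Pi.sup_apply]
      constructor
      · simp [sup_of_le_left h]; linarith
      · simp [sup_of_le_left h]
    · right
      push_neg at h
      simp only [Pi.sub_apply, hx', Pi.sup_apply]
      constructor
      · simp [sup_of_le_right h.le]; linarith
      · simp [sup_of_le_right h.le]
  have hc1 : C (x' - xlo) ≤ C (x - xlo) := hCmono hdx' hdx hbz1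
  have hG1 : (F x θhi : EReal) - C (x - xlo) ≤ (F x' θhi : EReal) - C (x' - xlo) :=
    EReal.sub_le_sub (by exact_mod_cast hF1) hc1
  -- Step 2: xhat = x' ⊓ xbar
  set xhat : Vec n := x' ⊓ xbar with hxhat
  have hxhatL : xhat ∈ L := (hL hx'L hxbarL).2
  have hF2 : F x' θhi ≤ F xhat θhi := by
    by_contra h
    push_neg at h
    have := ((hQS θhi) hx'L hxbarL).2 h
    exact absurd (hxbar _ (hL hx'L hxbarL).1) (not_le.mpr this)
  have hdxh : xhat - xlo ∈ DeltaSet L := ⟨xhat, hxhatL, xlo, hxloL, rfl⟩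
  have hxlox' : xlo ≤ x' := le_sup_right
  have hbz2 : BetweenZero (xhat - xlo) (x' - xlo) := by
    intro i
    left
    simp only [Pi.sub_apply, hxhat, Pi.inf_apply]
    constructor
    · have h1 : xlo i ≤ x' i ⊓ xbar i := le_inf (hxlox' i) (hle i)
      linarith
    · have : x' i ⊓ xbar i ≤ x' i := inf_le_left
      linarith
  have hc2 : C (xhat - xlo) ≤ C (x' - xlo) := hCmono hdxh hdx' hbz2
  have hG2 : (F x' θhi : EReal) - C (x' - xlo) ≤ (F xhat θhi : EReal) - C (xhat - xlo) :=
    EReal.sub_le_sub (by exact_mod_cast hF2) hc2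
  refine ⟨xhat, hxhatL, fun y hy => ((hxmax y hy).trans hG1).trans hG2, ?_, inf_le_right⟩
  exact le_inf hxlox' hle
end
end

section
/- (le Chatelier principle, upper-bound part) Under the same hypotheses (F quasi-supermodular in x with single-crossing differences in (x,θ), C monotone, θ̲ ≤ θ̄, x̲ ∈ argmax_{x∈L} F(x,θ̲)): if x̄ is the largest element of argmax_{x∈L} F(x,θ̄) and x̄ ≥ x̲, then every x̂ ∈ argmax_{x∈L} [F(x,θ̄) − C(x−x̲)] satisfies x̂ ≤ x̄. -/
noncomputable section

/-- Theorem 2, le Chatelier principle: upper-bound part. -/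
theorem le_chatelier_upper_bound {n : ℕ} {Θ : Type*} [PartialOrder Θ]
    (L : Set (Vec n)) (hL : SublatticeSet L)
    (F : Vec n → Θ → ℝ) (C : Vec n → EReal)
    (hQS : ∀ θ : Θ, QSupermodOn L (fun x => F x θ))
    (hSCD : SCDOn L F)
    (hC0 : ∀ e, 0 ≤ C e) (hCfin : C 0 < ⊤)
    (hCmono : MonoCostOn L C)
    (θlo θhi : Θ) (hθ : θlo ≤ θhi)
    (xlo : Vec n) (hxloL : xlo ∈ L) (hxlo : ∀ x ∈ L, F x θlo ≤ F xlo θlo)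
    (xbar : Vec n) (hxbarL : xbar ∈ L) (hxbar : ∀ x ∈ L, F x θhi ≤ F xbar θhi)
    (hlargest : ∀ z ∈ L, (∀ x ∈ L, F x θhi ≤ F z θhi) → z ≤ xbar)
    (hle : xlo ≤ xbar)
    (xhat : Vec n) (hxhatL : xhat ∈ L)
    (hxhat : ∀ y ∈ L,
      (F y θhi : EReal) - C (y - xlo) ≤ (F xhat θhi : EReal) - C (xhat - xlo)) :
    xhat ≤ xbar := by
  have hm : xhat ⊓ xbar ∈ L := (hL hxhatL hxbarL).2
  have hs : xhat ⊔ xbar ∈ L := (hL hxhatL hxbarL).1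
  have hD0 : (0 : Vec n) ∈ DeltaSet L := ⟨xlo, hxloL, xlo, hxloL, by simp⟩
  have hDx : xhat - xlo ∈ DeltaSet L := ⟨xhat, hxhatL, xlo, hxloL, rfl⟩
  have hDm : xhat ⊓ xbar - xlo ∈ DeltaSet L := ⟨_, hm, xlo, hxloL, rfl⟩
  have hC0ne : C 0 ≠ ⊥ := ne_of_gt (lt_of_lt_of_le (by exact EReal.bot_lt_zero) (hC0 0))
  have hC0top : C 0 ≠ ⊤ := ne_of_lt hCfin
  -- C (xhat - xlo) ≠ ⊤
  have hka : C (xhat - xlo) ≠ ⊤ := by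
    intro htop
    have h := hxhat xlo hxloL
    have hx : xlo - xlo = (0 : Vec n) := by simp
    rw [hx, htop] at h
    rw [EReal.sub_top, le_bot_iff] at h
    have hfin : C 0 = ((C 0).toReal : EReal) := (EReal.coe_toReal hC0top hC0ne).symm
    rw [hfin, ← EReal.coe_sub] at h
    exact EReal.coe_ne_bot _ h
  -- betweenness
  have hbet : BetweenZero (xhat ⊓ xbar - xlo) (xhat - xlo) := by
    intro i
    rcases le_total (xhat i) (xbar i) with h1 | h1
    · have : (xhat ⊓ xbar) i = xhat i := min_eq_left h1
      rcases le_total 0 (xhat i - xlo i) with h2 | h2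
      · left; constructor <;> simp [Pi.sub_apply, this, Pi.inf_apply, min_eq_left h1] <;> linarith
      · right; constructor <;> simp [Pi.sub_apply, Pi.inf_apply, min_eq_left h1] <;> linarith
    · have hlo := hle i
      left
      constructor <;> simp [Pi.sub_apply, Pi.inf_apply, min_eq_right h1] <;> linarith [hle i]
  have hCle : C (xhat ⊓ xbar - xlo) ≤ C (xhat - xlo) := hCmono hDm hDx hbet
  have hkm : C (xhat ⊓ xbar - xlo) ≠ ⊤ := ne_of_lt (lt_of_le_of_lt hCle (lt_top_iff_ne_top.mpr hka))
  have hkab : C (xhat - xlo) ≠ ⊥ := ne_of_gt (lt_of_lt_of_le EReal.bot_lt_zero (hC0 _))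
  have hkmb : C (xhat ⊓ xbar - xlo) ≠ ⊥ := ne_of_gt (lt_of_lt_of_le EReal.bot_lt_zero (hC0 _))
  -- real values
  set a := (C (xhat - xlo)).toReal with ha
  set b := (C (xhat ⊓ xbar - xlo)).toReal with hb
  have haC : C (xhat - xlo) = (a : EReal) := (EReal.coe_toReal hka hkab).symm
  have hbC : C (xhat ⊓ xbar - xlo) = (b : EReal) := (EReal.coe_toReal hkm hkmb).symm
  have hba : b ≤ a := by
    rw [haC, hbC] at hCle; exact_mod_cast hCle
  have hopt := hxhat _ hm
  rw [haC, hbC, ← EReal.coe_sub, ← EReal.coe_sub, EReal.coe_le_coe_iff] at hopt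
  -- F m ≤ F xhat at θhi
  have hFm : F (xhat ⊓ xbar) θhi ≤ F xhat θhi := by linarith
  -- quasi-supermodularity
  have hQ := (hQS θhi hxhatL hxbarL).1 hFm
  -- s is argmax
  have hsmax : ∀ x ∈ L, F x θhi ≤ F (xhat ⊔ xbar) θhi := fun x hx =>
    le_trans (hxbar x hx) hQ
  have := hlargest _ hs hsmax
  exact le_trans le_sup_left this
end
end

section
/- (Strict le Chatelier) Let L be a sublattice of ℝⁿ, F quasi-supermodular in x with single-crossing differences in (x,θ), and C strictly monotone. Fix θ̲ ≤ θ̄, x̲ ∈ argmax_{x∈L} F(x,θ̲), and x̄ ∈ argmax_{x∈L} F(x,θ̄) with x̄ ≥ x̲. Then every x̂ ∈ argmax_{x∈L} [F(x,θ̄) − C(x−x̲)] satisfies x̲ ≤ x̂ ≤ x̄. -/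
noncomputable section

/-- The cost `C` is strictly monotone on `ΔL`. -/
def StrictMonoCostOn {n : ℕ} (L : Set (Vec n)) (C : Vec n → EReal) : Prop :=
  ∀ ⦃e'⦄, e' ∈ DeltaSet L → ∀ ⦃e⦄, e ∈ DeltaSet L → e' ≠ e → BetweenZero e' e → C e' < C e

/-- Proposition 3: strict le Chatelier principle. -/
theorem strict_le_chatelier {n : ℕ} {Θ : Type*} [PartialOrder Θ]
    (L : Set (Vec n)) (hL : SublatticeSet L)
    (F : Vec n → Θ → ℝ) (C : Vec n → EReal)
    (hQS : ∀ θ : Θ, QSupermodOn L (fun x => F x θ))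
    (hSCD : SCDOn L F)
    (hC0 : ∀ e, 0 ≤ C e) (hCfin : C 0 < ⊤)
    (hCsmono : StrictMonoCostOn L C)
    (θlo θhi : Θ) (hθ : θlo ≤ θhi)
    (xlo : Vec n) (hxloL : xlo ∈ L) (hxlo : ∀ x ∈ L, F x θlo ≤ F xlo θlo)
    (xbar : Vec n) (hxbarL : xbar ∈ L) (hxbar : ∀ x ∈ L, F x θhi ≤ F xbar θhi)
    (hle : xlo ≤ xbar)
    (xhat : Vec n) (hxhatL : xhat ∈ L)
    (hxhat : ∀ y ∈ L,
      (F y θhi : EReal) - C (y - xlo) ≤ (F xhat θhi : EReal) - C (xhat - xlo)) :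
    xlo ≤ xhat ∧ xhat ≤ xbar := by
  classical
  -- C values are never ⊥
  have hnb : ∀ e, C e ≠ ⊥ := fun e h => by simpa [h] using hC0 e
  -- C (xhat - xlo) is finite
  have hhat_mem : xhat - xlo ∈ DeltaSet L := ⟨xhat, hxhatL, xlo, hxloL, rfl⟩
  have hfin : C (xhat - xlo) ≠ ⊤ := by
    intro h
    have h1 := hxhat xlo hxloL
    rw [h, EReal.sub_top] at h1
    have h0 : C (xlo - xlo) = C 0 := by simp
    rw [h0] at h1
    have hc0t : C 0 ≠ ⊤ := hCfin.ne
    have hc0b : C 0 ≠ ⊥ := hnb 0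
    obtain ⟨c0, hc0⟩ : ∃ c0 : ℝ, C 0 = (c0 : EReal) :=
      ⟨(C 0).toReal, (EReal.coe_toReal hc0t hc0b).symm⟩
    rw [hc0, ← EReal.coe_sub] at h1
    exact (EReal.coe_ne_bot _) (le_bot_iff.mp h1)
  -- key contradiction lemma
  have key : ∀ y ∈ L, F xhat θhi ≤ F y θhi →
      C (y - xlo) < C (xhat - xlo) → False := by
    intro y hyL hF hClt
    have hopt := hxhat y hyL
    obtain ⟨d, hd⟩ : ∃ d : ℝ, C (xhat - xlo) = (d : EReal) :=
      ⟨(C (xhat - xlo)).toReal, (EReal.coe_toReal hfin (hnb _)).symm⟩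
    have hyt : C (y - xlo) ≠ ⊤ := (hClt.trans_le le_top).ne
    obtain ⟨c, hc⟩ : ∃ c : ℝ, C (y - xlo) = (c : EReal) :=
      ⟨(C (y - xlo)).toReal, (EReal.coe_toReal hyt (hnb _)).symm⟩
    rw [hd, hc] at hopt hClt
    rw [← EReal.coe_sub, ← EReal.coe_sub, EReal.coe_le_coe_iff] at hopt
    rw [EReal.coe_lt_coe_iff] at hClt
    linarith
  have h1 : xlo ≤ xhat := by
    by_contra h1
    set y := xhat ⊔ xlo with hy
    have hyL : y ∈ L := (hL hxhatL hxloL).1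
    have hmL : xlo ⊓ xhat ∈ L := (hL hxloL hxhatL).2
    -- F xhat θlo ≤ F y θlo via quasi-supermodularity
    have hq := (hQS θlo hxloL hxhatL).1 (hxlo _ hmL)
    have hF1 : F xhat θlo ≤ F y θlo := by rwa [sup_comm] at hq
    have hF2 : F xhat θhi ≤ F y θhi :=
      (hSCD hxhatL hyL le_sup_left hθ).1 hF1
    -- cost comparison
    have hymem : y - xlo ∈ DeltaSet L := ⟨y, hyL, xlo, hxloL, rfl⟩
    have hne : y - xlo ≠ xhat - xlo := by
      intro h
      have : y = xhat := by
        have := congrArg (· + xlo) h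
        simpa using this
      exact h1 (sup_eq_left.mp this)
    have hbtw : BetweenZero (y - xlo) (xhat - xlo) := by
      intro i
      rcases le_total (xlo i) (xhat i) with h | h
      · left
        constructor
        · simp [hy, Pi.sup_apply, max_eq_left h, sub_nonneg, h]
        · simp [hy, Pi.sup_apply, max_eq_left h]
      · right
        constructor
        · have hyx : xhat i ≤ y i := by
            simp [hy, Pi.sup_apply, le_max_iff]
          simpa [Pi.sub_apply] using sub_le_sub_right hyx (xlo i)
        · simp [hy, Pi.sup_apply, max_eq_right h]
    exact key y hyL hF2 (hCsmono hymem hhat_mem hne hbtw)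
  refine ⟨h1, ?_⟩
  by_contra h2
  set y := xhat ⊓ xbar with hy
  have hyL : y ∈ L := (hL hxhatL hxbarL).2
  have hsL : xhat ⊔ xbar ∈ L := (hL hxhatL hxbarL).1
  have hns : ¬ F xbar θhi < F (xhat ⊔ xbar) θhi := not_lt.2 (hxbar _ hsL)
  have hF2 : F xhat θhi ≤ F y θhi :=
    not_lt.1 (fun h => hns ((hQS θhi hxhatL hxbarL).2 h))
  have hymem : y - xlo ∈ DeltaSet L := ⟨y, hyL, xlo, hxloL, rfl⟩
  have hne : y - xlo ≠ xhat - xlo := by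
    intro h
    have : y = xhat := by
      have := congrArg (· + xlo) h
      simpa using this
    exact h2 (inf_eq_left.mp this)
  have hbtw : BetweenZero (y - xlo) (xhat - xlo) := by
    intro i
    left
    constructor
    · have : xlo i ≤ y i := le_inf (h1 i) (hle i)
      simpa [Pi.sub_apply, sub_nonneg] using this
    · have : y i ≤ xhat i := inf_le_left
      simpa [Pi.sub_apply] using this
  exact key y hyL hF2 (hCsmono hymem hhat_mem hne hbtw)
end
end

section
/- (Two-stage le Chatelier with costly long-run adjustment) Let L be a sublattice of ℝⁿ, F quasi-supermodular in x with single-crossing differences in (x,θ), and C₁, C₂ : ΔL → [0,∞] monotone. Fix θ̲ ≤ θ̄ and x̲ ∈ argmax_{x∈L} F(x,θ̲). If both argmaxes below are nonempty, then there exist x₁ ∈ argmax_{x∈L} [F(x,θ̄) − C₁(x−x̲)] and x₂ ∈ argmax_{x∈L} [F(x,θ̄) − C₂(x−x₁)] with x̲ ≤ x₁ ≤ x₂. -/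
noncomputable section

lemma mem_deltaSet {n : ℕ} {L : Set (Vec n)} {x y : Vec n} (hx : x ∈ L) (hy : y ∈ L) :
    x - y ∈ DeltaSet L := ⟨x, hx, y, hy, rfl⟩

/-- Generic coordinatewise betweenness fact used for cost comparisons. -/
lemma betweenZero_sup_sub {n : ℕ} (x l b : Vec n) (hlb : l ≤ b) :
    BetweenZero ((x ⊔ l) - b) (x - b) := by
  intro i
  simp only [Pi.sup_apply, Pi.sub_apply]
  rcases le_total (l i) (x i) with h | h
  · rw [sup_eq_left.2 h]
    rcases le_total 0 (x i - b i) with h' | h'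
    · exact Or.inl ⟨h', le_rfl⟩
    · exact Or.inr ⟨le_rfl, h'⟩
  · rw [sup_eq_right.2 h]
    refine Or.inr ⟨by linarith [hlb i], by linarith [hlb i]⟩

/-- Proposition 2: two-stage le Chatelier with costly long-run adjustment. -/
theorem two_stage_le_chatelier {n : ℕ} {Θ : Type*} [PartialOrder Θ]
    (L : Set (Vec n)) (hL : SublatticeSet L)
    (F : Vec n → Θ → ℝ) (C₁ C₂ : Vec n → EReal)
    (hQS : ∀ θ : Θ, QSupermodOn L (fun x => F x θ))
    (hSCD : SCDOn L F)
    (hC₁0 : ∀ e, 0 ≤ C₁ e) (hC₂0 : ∀ e, 0 ≤ C₂ e)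
    (hC₁fin : C₁ 0 < ⊤) (hC₂fin : C₂ 0 < ⊤)
    (hC₁mono : MonoCostOn L C₁) (hC₂mono : MonoCostOn L C₂)
    (θlo θhi : Θ) (hθ : θlo ≤ θhi)
    (xlo : Vec n) (hxloL : xlo ∈ L) (hxlo : ∀ x ∈ L, F x θlo ≤ F xlo θlo)
    (hne₁ : ∃ x ∈ L, ∀ y ∈ L,
      (F y θhi : EReal) - C₁ (y - xlo) ≤ (F x θhi : EReal) - C₁ (x - xlo))
    (hne₂ : ∀ x₁ ∈ L, (∀ y ∈ L,
        (F y θhi : EReal) - C₁ (y - xlo) ≤ (F x₁ θhi : EReal) - C₁ (x₁ - xlo)) →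
      ∃ x ∈ L, ∀ y ∈ L,
        (F y θhi : EReal) - C₂ (y - x₁) ≤ (F x θhi : EReal) - C₂ (x - x₁)) :
    ∃ x₁ ∈ L, ∃ x₂ ∈ L,
      (∀ y ∈ L,
        (F y θhi : EReal) - C₁ (y - xlo) ≤ (F x₁ θhi : EReal) - C₁ (x₁ - xlo)) ∧
      (∀ y ∈ L,
        (F y θhi : EReal) - C₂ (y - x₁) ≤ (F x₂ θhi : EReal) - C₂ (x₂ - x₁)) ∧
      xlo ≤ x₁ ∧ x₁ ≤ x₂ := by
    classical
  -- a helper: joining with xlo improves F at θhi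
  have joinF : ∀ x ∈ L, F x θhi ≤ F (x ⊔ xlo) θhi := by
    intro x hx
    have hsup : x ⊔ xlo ∈ L := by
      have := (hL hxloL hx).1; rwa [sup_comm] at this
    have hinf : xlo ⊓ x ∈ L := (hL hxloL hx).2
    have h1 : F x θlo ≤ F (x ⊔ xlo) θlo := by
      have := ((hQS θlo) hxloL hx).1 (hxlo _ hinf)
      rwa [sup_comm] at this
    exact (hSCD hx hsup le_sup_left hθ).1 h1
  obtain ⟨x₁', hx₁'L, hx₁'opt⟩ := hne₁
  set x₁ : Vec n := x₁' ⊔ xlo with hx₁def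
  have hx₁L : x₁ ∈ L := by
    have := (hL hxloL hx₁'L).1; rwa [sup_comm] at this
  have hxle₁ : xlo ≤ x₁ := le_sup_right
  -- x₁ is also a stage-1 maximizer
  have hcost₁ : C₁ (x₁ - xlo) ≤ C₁ (x₁' - xlo) :=
    hC₁mono (mem_deltaSet hx₁L hxloL) (mem_deltaSet hx₁'L hxloL)
      (betweenZero_sup_sub x₁' xlo xlo le_rfl)
  have hstep₁ : (F x₁' θhi : EReal) - C₁ (x₁' - xlo) ≤ (F x₁ θhi : EReal) - C₁ (x₁ - xlo) :=
    EReal.sub_le_sub (EReal.coe_le_coe_iff.2 (joinF x₁' hx₁'L)) hcost₁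
  have hx₁opt : ∀ y ∈ L,
      (F y θhi : EReal) - C₁ (y - xlo) ≤ (F x₁ θhi : EReal) - C₁ (x₁ - xlo) :=
    fun y hy => (hx₁'opt y hy).trans hstep₁
  -- the optimal stage-1 cost is finite
  have hC₁x₁ : C₁ (x₁ - xlo) ≠ ⊤ := by
    intro htop
    have h0 := hx₁opt xlo hxloL
    rw [sub_self, htop, EReal.sub_top, le_bot_iff] at h0
    have hb : C₁ 0 ≠ ⊥ := ne_bot_of_le_ne_bot (by simp) (hC₁0 0)
    obtain ⟨r0, hr0⟩ : ∃ r0 : ℝ, C₁ 0 = (r0 : EReal) :=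
      ⟨(C₁ 0).toReal, (EReal.coe_toReal hC₁fin.ne hb).symm⟩
    rw [hr0, ← EReal.coe_sub] at h0
    exact EReal.coe_ne_bot _ h0
  -- stage 2
  obtain ⟨x₂', hx₂'L, hx₂'opt⟩ := hne₂ x₁ hx₁L hx₁opt
  -- first adjustment: join with xlo
  set x₂'' : Vec n := x₂' ⊔ xlo with hx₂''def
  have hx₂''L : x₂'' ∈ L := by
    have := (hL hxloL hx₂'L).1; rwa [sup_comm] at this
  have hcost₂a : C₂ (x₂'' - x₁) ≤ C₂ (x₂' - x₁) :=
    hC₂mono (mem_deltaSet hx₂''L hx₁L) (mem_deltaSet hx₂'L hx₁L)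
      (betweenZero_sup_sub x₂' xlo x₁ hxle₁)
  have hstepa : (F x₂' θhi : EReal) - C₂ (x₂' - x₁) ≤ (F x₂'' θhi : EReal) - C₂ (x₂'' - x₁) :=
    EReal.sub_le_sub (EReal.coe_le_coe_iff.2 (joinF x₂' hx₂'L)) hcost₂a
  -- second adjustment: join with x₁
  set m : Vec n := x₁ ⊓ x₂'' with hmdef
  set x₂ : Vec n := x₁ ⊔ x₂'' with hx₂def
  have hmL : m ∈ L := (hL hx₁L hx₂''L).2
  have hx₂L : x₂ ∈ L := (hL hx₁L hx₂''L).1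
  have hxlom : xlo ≤ m := le_inf hxle₁ le_sup_right
  -- C₁ (m - xlo) ≤ C₁ (x₁ - xlo)
  have hcostm : C₁ (m - xlo) ≤ C₁ (x₁ - xlo) := by
    refine hC₁mono (mem_deltaSet hmL hxloL) (mem_deltaSet hx₁L hxloL) (fun i => Or.inl ?_)
    constructor
    · simpa using (hxlom i)
    · have : m i ≤ x₁ i := inf_le_left
      simp only [Pi.sub_apply]; linarith
  have hC₁m : C₁ (m - xlo) ≠ ⊤ := fun h => hC₁x₁ (top_le_iff.1 (h ▸ hcostm))
  have hC₁mb : C₁ (m - xlo) ≠ ⊥ := ne_bot_of_le_ne_bot (by simp) (hC₁0 _)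
  obtain ⟨r, hr⟩ : ∃ r : ℝ, C₁ (m - xlo) = (r : EReal) :=
    ⟨(C₁ (m - xlo)).toReal, (EReal.coe_toReal hC₁m hC₁mb).symm⟩
  -- F m θhi ≤ F x₁ θhi
  have hFm : F m θhi ≤ F x₁ θhi := by
    have h1 : (F m θhi : EReal) - C₁ (m - xlo) ≤ (F x₁ θhi : EReal) - C₁ (m - xlo) :=
      (hx₁opt m hmL).trans (EReal.sub_le_sub le_rfl hcostm)
    rw [hr, ← EReal.coe_sub, ← EReal.coe_sub, EReal.coe_le_coe_iff] at h1
    linarith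
  have hFx₂ : F x₂'' θhi ≤ F x₂ θhi := ((hQS θhi) hx₁L hx₂''L).1 hFm
  have hcost₂b : C₂ (x₂ - x₁) ≤ C₂ (x₂'' - x₁) := by
    refine hC₂mono (mem_deltaSet hx₂L hx₁L) (mem_deltaSet hx₂''L hx₁L) ?_
    have := betweenZero_sup_sub x₂'' x₁ x₁ le_rfl
    rwa [sup_comm x₂'' x₁] at this
  have hstepb : (F x₂'' θhi : EReal) - C₂ (x₂'' - x₁) ≤ (F x₂ θhi : EReal) - C₂ (x₂ - x₁) :=
    EReal.sub_le_sub (EReal.coe_le_coe_iff.2 hFx₂) hcost₂b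
  refine ⟨x₁, hx₁L, x₂, hx₂L, hx₁opt, fun y hy => ((hx₂'opt y hy).trans hstepa).trans hstepb,
    hxle₁, le_sup_left⟩
end
end

section
/- (Dynamic le Chatelier) Let L be a sublattice of ℝⁿ, δ ∈ (0,1), F quasi-supermodular in x with single-crossing differences in (x,θ), and (C_t)_{t≥1} monotone cost functions. Fix θ̲ ≤ θ̄, x₀ = x̲ ∈ argmax_{x∈L} F(x,θ̲), a parameter sequence (θ_t) with θ̲ ≤ θ_t ≤ θ̄ for all t, and x̄ ∈ argmax_{x∈L} F(x,θ̄) with x̄ ≥ x̲. If the problem of maximizing 𝒢((x_t),x₀) = Σ_{t≥1} δ^{t−1}[F(x_t,θ_t) − C_t(x_t − x_{t−1})] over sequences (x_t) in L admits a solution, then it admits a solution with x̲ ≤ x_t ≤ x̄ for every t. -/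
noncomputable section

/-- Discounted objective of the long-lived agent: the sequence `x : ℕ → Vec n`
represents choices, with `x 0` the initial action; period `t+1` has parameter
`θs t`, cost `Cs t` and discount weight `δ ^ t`. -/
def Gobj {n : ℕ} {Θ : Type*} (δ : ℝ) (F : Vec n → Θ → ℝ) (θs : ℕ → Θ)
    (Cs : ℕ → Vec n → EReal) (x : ℕ → Vec n) : EReal :=
  ∑' t : ℕ, ((δ ^ t : ℝ) : EReal) * ((F (x (t + 1)) (θs t) : EReal) - Cs t (x (t + 1) - x t))


namespace DLC
open Filter Topology

-- (assume aux1 lemmas; re-paste via include)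


def coeHom : ℝ →+ EReal := ⟨⟨Real.toEReal, EReal.coe_zero⟩, EReal.coe_add⟩

lemma coe_finset_sum (s : Finset ℕ) (u : ℕ → ℝ) :
    ((∑ t ∈ s, u t : ℝ) : EReal) = ∑ t ∈ s, ((u t : ℝ) : EReal) :=
  map_sum coeHom u s

lemma hasSum_coe {u : ℕ → ℝ} {r : ℝ} :
    HasSum (fun t => ((u t : ℝ) : EReal)) (r : EReal) ↔ HasSum u r := by
  unfold HasSum
  simp only [← coe_finset_sum]
  exact EReal.tendsto_coe

lemma sum_eq_bot {s : Finset ℕ} {f : ℕ → EReal} {t0 : ℕ} (h : t0 ∈ s) (hf : f t0 = ⊥) :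
    ∑ t ∈ s, f t = ⊥ := by
  rw [← Finset.add_sum_erase s f h, hf, EReal.bot_add]

lemma hasSum_bot {f : ℕ → EReal} {t0 : ℕ} (hf : f t0 = ⊥) : HasSum f ⊥ := by
  have hev : ∀ᶠ s : Finset ℕ in atTop, ∑ t ∈ s, f t = (⊥ : EReal) := by
    filter_upwards [eventually_ge_atTop ({t0} : Finset ℕ)] with s hs
    exact sum_eq_bot (hs (Finset.mem_singleton_self t0)) hf
  exact Tendsto.congr' (by filter_upwards [hev] with s hs using hs.symm) tendsto_const_nhds

lemma hasSum_nonneg_iSup {h : ℕ → EReal} (h0 : ∀ t, 0 ≤ h t) :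
    HasSum h (⨆ s : Finset ℕ, ∑ t ∈ s, h t) :=
  tendsto_atTop_iSup fun s s' hss =>
    Finset.sum_le_sum_of_subset_of_nonneg hss fun i _ _ => h0 i

lemma tendsto_top_mono {F G : Finset ℕ → EReal} (h : ∀ s, F s ≤ G s)
    (hF : Tendsto F atTop (𝓝 ⊤)) : Tendsto G atTop (𝓝 ⊤) := by
  rw [EReal.tendsto_nhds_top_iff_real] at *
  intro x; filter_upwards [hF x] with s hs using lt_of_lt_of_le hs (h s)

lemma tendsto_bot_mono {F G : Finset ℕ → EReal} (h : ∀ s, F s ≤ G s)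
    (hG : Tendsto G atTop (𝓝 ⊥)) : Tendsto F atTop (𝓝 ⊥) := by
  rw [EReal.tendsto_nhds_bot_iff_real] at *
  intro x; filter_upwards [hG x] with s hs using lt_of_le_of_lt (h s) hs


lemma tsum_coe_le_tsum_coe {u v : ℕ → ℝ} (hle : ∀ t, u t ≤ v t) :
    ∑' t, ((u t : ℝ) : EReal) ≤ ∑' t, ((v t : ℝ) : EReal) := by
  set w : ℕ → ℝ := fun t => v t - u t with hw
  have hw0 : ∀ t, (0 : EReal) ≤ ((w t : ℝ) : EReal) := fun t => by
    exact_mod_cast sub_nonneg.2 (hle t)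
  set S : EReal := ⨆ s : Finset ℕ, ∑ t ∈ s, ((w t : ℝ) : EReal) with hS
  have hSw : HasSum (fun t => ((w t : ℝ) : EReal)) S := hasSum_nonneg_iSup hw0
  have hS0 : (0 : EReal) ≤ S := le_iSup_of_le (∅ : Finset ℕ) (by simp)
  have hsumle : ∀ s : Finset ℕ, (∑ t ∈ s, ((u t : ℝ) : EReal)) ≤ ∑ t ∈ s, ((v t : ℝ) : EReal) :=
    fun s => Finset.sum_le_sum fun i _ => EReal.coe_le_coe_iff.2 (hle i)
  by_cases hu : Summable u
  · obtain ⟨r, hr⟩ := hu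
    have hfr : HasSum (fun t => ((u t : ℝ) : EReal)) (r : EReal) := hasSum_coe.2 hr
    have hgr : HasSum (fun t => ((v t : ℝ) : EReal)) ((r : EReal) + S) := by
      have heq : (fun s : Finset ℕ => ∑ t ∈ s, ((v t : ℝ) : EReal))
          = fun s : Finset ℕ => (∑ t ∈ s, ((u t : ℝ) : EReal)) + ∑ t ∈ s, ((w t : ℝ) : EReal) := by
        funext s
        rw [← Finset.sum_add_distrib]
        refine Finset.sum_congr rfl fun i _ => ?_
        rw [← EReal.coe_add]
        norm_num [hw]
      show Tendsto _ atTop _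
      rw [heq]
      have := (EReal.continuousAt_add (p := ((r : EReal), S))
        (Or.inl (EReal.coe_ne_top r)) (Or.inl (EReal.coe_ne_bot r))).tendsto.comp
        (Tendsto.prodMk_nhds hfr hSw)
      exact this
    rw [hfr.tsum_eq, hgr.tsum_eq]
    calc (r : EReal) = (r : EReal) + 0 := by rw [add_zero]
      _ ≤ (r : EReal) + S := add_le_add le_rfl hS0
  · by_cases hfs : Summable (fun t => ((u t : ℝ) : EReal))
    · obtain ⟨V, hV⟩ := hfs
      induction V using EReal.rec with
      | bot => rw [hV.tsum_eq]; exact bot_le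
      | coe r => exact absurd (hasSum_coe.1 hV).summable hu
      | top =>
        rw [hV.tsum_eq, (show HasSum (fun t => ((v t : ℝ) : EReal)) ⊤ from tendsto_top_mono hsumle hV).tsum_eq]
    · rw [tsum_eq_zero_of_not_summable hfs]
      by_cases hgs : Summable (fun t => ((v t : ℝ) : EReal))
      · obtain ⟨V, hV⟩ := hgs
        induction V using EReal.rec with
        | bot => exact absurd ⟨⊥, tendsto_bot_mono hsumle hV⟩ hfs
        | top => rw [hV.tsum_eq]; exact le_top
        | coe r =>
          exfalso
          have hvr : HasSum v r := hasSum_coe.1 hV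
          have hws : ¬ Summable w := by
            intro hws
            apply hu
            have := hvr.summable.sub hws
            simpa [hw] using this
          have hST : S = ⊤ := by
            by_contra hST
            obtain ⟨c, hc⟩ : ∃ c : ℝ, S = (c : EReal) :=
              ⟨S.toReal, (EReal.coe_toReal hST (ne_bot_of_le_ne_bot (by simp) hS0)).symm⟩
            apply hws
            refine summable_of_sum_le (c := c) (fun t => sub_nonneg.2 (hle t)) fun s => ?_
            have h1 : ((∑ t ∈ s, w t : ℝ) : EReal) ≤ S := by
              rw [coe_finset_sum]; exact le_iSup_of_le s le_rfl
            rw [hc] at h1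
            exact_mod_cast h1
          apply hfs
          refine ⟨⊥, ?_⟩
          have heq : (fun s : Finset ℕ => ∑ t ∈ s, ((u t : ℝ) : EReal))
              = fun s : Finset ℕ => (∑ t ∈ s, ((v t : ℝ) : EReal)) + (- ∑ t ∈ s, ((w t : ℝ) : EReal)) := by
            funext s
            rw [← coe_finset_sum, ← coe_finset_sum, ← coe_finset_sum, ← EReal.coe_neg, ← EReal.coe_add]
            norm_cast
            rw [← sub_eq_add_neg, ← Finset.sum_sub_distrib]
            exact Finset.sum_congr rfl fun i _ => by simp [hw]
          show Tendsto _ atTop _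
          rw [heq]
          have hnegS : Tendsto (fun s : Finset ℕ => - ∑ t ∈ s, ((w t : ℝ) : EReal)) atTop (𝓝 (⊥ : EReal)) := by
            have : Tendsto (fun x : EReal => -x) (𝓝 S) (𝓝 (-S)) := continuous_neg.tendsto S
            have h2 := this.comp hSw
            have h3 : -S = (⊥ : EReal) := by rw [hST]; rfl
            rw [h3] at h2
            exact h2
          have := (EReal.continuousAt_add (p := ((r : EReal), (⊥ : EReal)))
            (Or.inl (EReal.coe_ne_top r)) (Or.inl (EReal.coe_ne_bot r))).tendsto.comp
            (Tendsto.prodMk_nhds hV hnegS)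
          exact this
      · rw [tsum_eq_zero_of_not_summable hgs]

lemma ereal_tsum_le_tsum {f g : ℕ → EReal} (hle : ∀ t, f t ≤ g t) (hg : ∀ t, g t ≠ ⊤) :
    ∑' t, f t ≤ ∑' t, g t := by
  by_cases hbf : ∃ t, f t = ⊥
  · obtain ⟨t0, ht0⟩ := hbf
    rw [(hasSum_bot ht0).tsum_eq]
    exact bot_le
  · push_neg at hbf
    have hf_top : ∀ t, f t ≠ ⊤ := fun t h => hg t (top_le_iff.1 (h ▸ hle t))
    have hgb : ∀ t, g t ≠ ⊥ := fun t h => hbf t (le_bot_iff.1 (h ▸ hle t))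
    have hfu : ∀ t, f t = ((f t).toReal : EReal) := fun t => (EReal.coe_toReal (hf_top t) (hbf t)).symm
    have hgv : ∀ t, g t = ((g t).toReal : EReal) := fun t => (EReal.coe_toReal (hg t) (hgb t)).symm
    have h1 : f = fun t => (((f t).toReal : ℝ) : EReal) := funext hfu
    have h2 : g = fun t => (((g t).toReal : ℝ) : EReal) := funext hgv
    rw [h1, h2]
    refine tsum_coe_le_tsum_coe fun t => ?_
    have := hle t
    rw [hfu t, hgv t] at this
    exact_mod_cast this


lemma coe_mul_ne_top {r : ℝ} (hr : 0 < r) {b : EReal} (hb : b ≠ ⊤) : (r : EReal) * b ≠ ⊤ := by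
  induction b using EReal.rec with
  | bot => rw [EReal.mul_bot_of_pos (by exact_mod_cast hr)]; simp
  | coe b => rw [← EReal.coe_mul]; exact EReal.coe_ne_top _
  | top => simp at hb

lemma clamp_mono_lip {a c b' b : ℝ} (h : b' ≤ b) :
    min c (max a b') ≤ min c (max a b) ∧ min c (max a b) - min c (max a b') ≤ b - b' := by
  constructor <;> · simp only [min_def, max_def]; split_ifs <;> linarith

end DLC

open DLC in
/-- Theorem 3: dynamic le Chatelier principle. -/
theorem dynamic_le_chatelier {n : ℕ} {Θ : Type*} [PartialOrder Θ]
    (L : Set (Vec n)) (hL : SublatticeSet L)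
    (δ : ℝ) (hδ0 : 0 < δ) (hδ1 : δ < 1)
    (F : Vec n → Θ → ℝ) (Cs : ℕ → Vec n → EReal)
    (hQS : ∀ θ : Θ, QSupermodOn L (fun x => F x θ))
    (hSCD : SCDOn L F)
    (hC0 : ∀ t e, 0 ≤ Cs t e) (hCfin : ∀ t, Cs t 0 < ⊤)
    (hCmono : ∀ t, MonoCostOn L (Cs t))
    (θlo θhi : Θ) (hθ : θlo ≤ θhi)
    (θs : ℕ → Θ) (hθs : ∀ t, θlo ≤ θs t ∧ θs t ≤ θhi)
    (xlo : Vec n) (hxloL : xlo ∈ L) (hxlo : ∀ x ∈ L, F x θlo ≤ F xlo θlo)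
    (xbar : Vec n) (hxbarL : xbar ∈ L) (hxbar : ∀ x ∈ L, F x θhi ≤ F xbar θhi)
    (hle : xlo ≤ xbar)
    (hsol : ∃ x : ℕ → Vec n, x 0 = xlo ∧ (∀ t, x (t + 1) ∈ L) ∧
      ∀ y : ℕ → Vec n, y 0 = xlo → (∀ t, y (t + 1) ∈ L) →
        Gobj δ F θs Cs y ≤ Gobj δ F θs Cs x) :
    ∃ x : ℕ → Vec n, x 0 = xlo ∧ (∀ t, x (t + 1) ∈ L) ∧
      (∀ y : ℕ → Vec n, y 0 = xlo → (∀ t, y (t + 1) ∈ L) →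
        Gobj δ F θs Cs y ≤ Gobj δ F θs Cs x) ∧
      ∀ t, xlo ≤ x (t + 1) ∧ x (t + 1) ≤ xbar := by
  obtain ⟨x, hx0, hxL, hmax⟩ := hsol
  have hxall : ∀ t, x t ∈ L := by
    intro t
    cases t with
    | zero => rw [hx0]; exact hxloL
    | succ t => exact hxL t
  set x' : ℕ → Vec n := fun t => xbar ⊓ (xlo ⊔ x t) with hx'def
  have hx'eq : ∀ t, x' t = xbar ⊓ (xlo ⊔ x t) := fun t => rfl
  have hx'L : ∀ t, x' t ∈ L := fun t => (hL hxbarL (hL hxloL (hxall t)).1).2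
  have hx'0 : x' 0 = xlo := by
    rw [hx'eq, hx0, sup_idem, inf_eq_right.2 hle]
  have hlo : ∀ t, xlo ≤ x' t := fun t => le_inf hle le_sup_left
  have hhi : ∀ t, x' t ≤ xbar := fun t => inf_le_left
  -- F step
  have hF : ∀ t, F (x (t + 1)) (θs t) ≤ F (x' (t + 1)) (θs t) := by
    intro t
    obtain ⟨hθ1, hθ2⟩ := hθs t
    have hz : x (t + 1) ∈ L := hxL t
    have hy : xlo ⊔ x (t + 1) ∈ L := (hL hxloL hz).1
    have h2 : F (x (t + 1)) θlo ≤ F (xlo ⊔ x (t + 1)) θlo :=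
      ((hQS θlo) hxloL hz).1 (hxlo _ (hL hxloL hz).2)
    have h3 : F (x (t + 1)) (θs t) ≤ F (xlo ⊔ x (t + 1)) (θs t) :=
      (hSCD hz hy le_sup_right hθ1).1 h2
    have hmeet : (xlo ⊔ x (t + 1)) ⊓ xbar ∈ L := (hL hy hxbarL).2
    have h5 : F (xlo ⊔ x (t + 1)) θhi ≤ F ((xlo ⊔ x (t + 1)) ⊓ xbar) θhi := by
      by_contra h
      push_neg at h
      exact absurd (((hQS θhi) hy hxbarL).2 h) (not_lt.2 (hxbar _ (hL hy hxbarL).1))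
    have h6 : F (xlo ⊔ x (t + 1)) (θs t) ≤ F ((xlo ⊔ x (t + 1)) ⊓ xbar) (θs t) := by
      by_contra h
      push_neg at h
      exact absurd ((hSCD hmeet hy inf_le_left hθ2).2 h) (not_lt.2 h5)
    have hrew : x' (t + 1) = (xlo ⊔ x (t + 1)) ⊓ xbar := by rw [hx'eq, inf_comm]
    rw [hrew]
    exact h3.trans h6
  -- cost step
  have hC : ∀ t, Cs t (x' (t + 1) - x' t) ≤ Cs t (x (t + 1) - x t) := by
    intro t
    have he' : x' (t + 1) - x' t ∈ DeltaSet L := ⟨_, hx'L (t + 1), _, hx'L t, rfl⟩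
    have he : x (t + 1) - x t ∈ DeltaSet L := ⟨_, hxall (t + 1), _, hxall t, rfl⟩
    refine hCmono t he' he ?_
    intro i
    have hxi : ∀ s, x' s i = min (xbar i) (max (xlo i) (x s i)) := fun s => by
      rw [hx'eq]
      simp [Pi.inf_apply, Pi.sup_apply]
    rcases le_total (x t i) (x (t + 1) i) with h | h
    · left
      obtain ⟨hm, hlip⟩ := clamp_mono_lip (a := xlo i) (c := xbar i) h
      constructor
      · simp only [Pi.sub_apply, hxi]; linarith
      · simp only [Pi.sub_apply, hxi]; linarith
    · right
      obtain ⟨hm, hlip⟩ := clamp_mono_lip (a := xlo i) (c := xbar i) h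
      constructor
      · simp only [Pi.sub_apply, hxi]; linarith
      · simp only [Pi.sub_apply, hxi]; linarith
  -- termwise comparison
  have hterm : ∀ t, ((δ ^ t : ℝ) : EReal) * ((F (x (t + 1)) (θs t) : EReal) - Cs t (x (t + 1) - x t))
      ≤ ((δ ^ t : ℝ) : EReal) * ((F (x' (t + 1)) (θs t) : EReal) - Cs t (x' (t + 1) - x' t)) := by
    intro t
    apply mul_le_mul_of_nonneg_left ?_ (EReal.coe_nonneg.2 (pow_nonneg hδ0.le t))
    rw [sub_eq_add_neg, sub_eq_add_neg]
    exact add_le_add (EReal.coe_le_coe_iff.2 (hF t)) (EReal.neg_le_neg_iff.2 (hC t))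
  have htop : ∀ t, ((δ ^ t : ℝ) : EReal) * ((F (x' (t + 1)) (θs t) : EReal) - Cs t (x' (t + 1) - x' t)) ≠ ⊤ := by
    intro t
    have hCnb : Cs t (x' (t + 1) - x' t) ≠ ⊥ := by
      intro hb
      have := hC0 t (x' (t + 1) - x' t)
      rw [hb] at this
      simp at this
    have hinner : (F (x' (t + 1)) (θs t) : EReal) - Cs t (x' (t + 1) - x' t) ≠ ⊤ := by
      rw [sub_eq_add_neg]
      refine (EReal.add_lt_top (EReal.coe_ne_top _) ?_).ne
      rw [Ne, EReal.neg_eq_top_iff]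
      exact hCnb
    exact coe_mul_ne_top (pow_pos hδ0 t) hinner
  have hGle : Gobj δ F θs Cs x ≤ Gobj δ F θs Cs x' := ereal_tsum_le_tsum hterm htop
  exact ⟨x', hx'0, fun t => hx'L (t + 1),
    fun y hy0 hyL => (hmax y hy0 hyL).trans hGle,
    fun t => ⟨hlo (t + 1), hhi (t + 1)⟩⟩
end
end

section
/- (Key step for dynamic le Chatelier) Under the dynamic setup with θ̲ ≤ θ_t for all t, F quasi-supermodular in x and single-crossing differences in (x,θ), each C_t monotone, and x₀ = x̲ ∈ argmax_{x∈L} F(x,θ̲): if (x_t)_{t≥1} maximizes 𝒢(·, x₀) = Σ δ^{t−1}[F(x_t,θ_t) − C_t(x_t−x_{t−1})], then the sequence (x̲ ∨ x_t)_{t≥1} also maximizes 𝒢(·, x₀). -/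
noncomputable section

namespace LeChatelierAux

open Filter Topology

/-- Coercion `ℝ → EReal` as an additive monoid hom. -/
def erealCoeHom : ℝ →+ EReal where
  toFun := ((↑) : ℝ → EReal)
  map_zero' := rfl
  map_add' := fun x y => EReal.coe_add x y

lemma coe_sum (s : Finset ℕ) (f : ℕ → ℝ) :
    ((∑ i ∈ s, f i : ℝ) : EReal) = ∑ i ∈ s, (f i : EReal) :=
  map_sum erealCoeHom f s

lemma hasSum_coe {A : ℕ → ℝ} {r : ℝ} (h : HasSum A r) :
    HasSum (fun t => (A t : EReal)) (r : EReal) :=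
  h.map erealCoeHom continuous_coe_real_ereal

lemma hasSum_coe_top {B : ℕ → ℝ}
    (h : Tendsto (fun s : Finset ℕ => ∑ i ∈ s, B i) atTop atTop) :
    HasSum (fun t => (B t : EReal)) ⊤ := by
  rw [HasSum, EReal.tendsto_nhds_top_iff_real]
  intro r
  filter_upwards [h.eventually_gt_atTop r] with s hs
  rw [← coe_sum]
  exact_mod_cast hs

lemma hasSum_coe_bot {B : ℕ → ℝ}
    (h : Tendsto (fun s : Finset ℕ => ∑ i ∈ s, B i) atTop atBot) :
    HasSum (fun t => (B t : EReal)) ⊥ := by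
  rw [HasSum, EReal.tendsto_nhds_bot_iff_real]
  intro r
  filter_upwards [h.eventually_lt_atBot r] with s hs
  rw [← coe_sum]
  exact_mod_cast hs

lemma finsetSum_eq_bot {f : ℕ → EReal} {s : Finset ℕ} {t : ℕ} (ht : t ∈ s) (h : f t = ⊥) :
    ∑ i ∈ s, f i = ⊥ := by
  rw [← Finset.add_sum_erase s f ht, h, EReal.bot_add]

lemma tsum_eq_bot {f : ℕ → EReal} (t : ℕ) (h : f t = ⊥) : ∑' i, f i = ⊥ := by
  refine HasSum.tsum_eq ?_
  rw [HasSum]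
  have hev : ∀ᶠ s : Finset ℕ in atTop, ∑ i ∈ s, f i = ⊥ := by
    filter_upwards [eventually_ge_atTop ({t} : Finset ℕ)] with s hs
    exact finsetSum_eq_bot (hs (Finset.mem_singleton_self t)) h
  exact Tendsto.congr' (hev.mono fun s hs => hs.symm) tendsto_const_nhds

lemma exists_sum_gt {D : ℕ → ℝ} (h0 : ∀ t, 0 ≤ D t) (hns : ¬ Summable D) (M : ℝ) :
    ∃ T : Finset ℕ, M < ∑ i ∈ T, D i := by
  by_contra h
  push_neg at h
  exact hns (summable_of_sum_le (fun t => h0 t) h)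

lemma tendsto_sum_atTop {D : ℕ → ℝ} (h0 : ∀ t, 0 ≤ D t) (hns : ¬ Summable D) :
    Tendsto (fun s : Finset ℕ => ∑ i ∈ s, D i) atTop atTop := by
  refine tendsto_atTop.2 fun M => ?_
  obtain ⟨T, hT⟩ := exists_sum_gt h0 hns M
  rw [eventually_atTop]
  exact ⟨T, fun s hs =>
    hT.le.trans (Finset.sum_le_sum_of_subset_of_nonneg hs fun i _ _ => h0 i)⟩

lemma pos_sub_neg (r : ℝ) : max r 0 - max (-r) 0 = r := by
  rcases le_total r 0 with h | h
  · rw [max_eq_right h, max_eq_left (neg_nonneg.2 h)]; ring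
  · rw [max_eq_left h, max_eq_right (neg_nonpos.2 h)]; ring

lemma not_ev_neg {C : ℕ → ℝ} (h : ¬ Summable (fun t => max (C t) 0)) :
    ¬ ∀ᶠ s : Finset ℕ in atTop, ∑ i ∈ s, C i < 0 := by
  intro hev
  obtain ⟨s₀, hs₀⟩ := eventually_atTop.1 hev
  obtain ⟨T, hT⟩ := exists_sum_gt (fun t => le_max_right _ _) h
      (∑ i ∈ s₀, max (C i) 0 - ∑ i ∈ s₀, C i)
  set T' := T.filter (fun i => 0 < C i) with hT'def
  have hTT' : ∑ i ∈ T', max (C i) 0 = ∑ i ∈ T, max (C i) 0 := by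
    refine Finset.sum_filter_of_ne fun i _ hne => ?_
    rcases lt_or_ge 0 (C i) with hc | hc
    · exact hc
    · exact absurd (max_eq_right hc) hne
  have hs := hs₀ (s₀ ∪ T') Finset.subset_union_left
  have hsplit : ∑ i ∈ s₀ ∪ T', C i = ∑ i ∈ s₀, C i + ∑ i ∈ T' \ s₀, C i := by
    rw [← Finset.union_sdiff_self_eq_union, Finset.sum_union Finset.disjoint_sdiff]
  have hpos : ∀ i ∈ T' \ s₀, C i = max (C i) 0 := by
    intro i hi
    have hmem := (Finset.mem_sdiff.1 hi).1
    have : 0 < C i := (Finset.mem_filter.1 hmem).2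
    exact (max_eq_left this.le).symm
  have h1 : ∑ i ∈ T' \ s₀, C i = ∑ i ∈ T', max (C i) 0 - ∑ i ∈ T' ∩ s₀, max (C i) 0 := by
    rw [Finset.sum_congr rfl hpos, eq_sub_iff_add_eq, add_comm, Finset.sum_inter_add_sum_sdiff]
  have h2 : ∑ i ∈ T' ∩ s₀, max (C i) 0 ≤ ∑ i ∈ s₀, max (C i) 0 :=
    Finset.sum_le_sum_of_subset_of_nonneg Finset.inter_subset_right
      (fun i _ _ => le_max_right _ _)
  rw [hsplit, h1, hTT'] at hs
  linarith

lemma not_ev_pos {C : ℕ → ℝ} (h : ¬ Summable (fun t => max (-C t) 0)) :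
    ¬ ∀ᶠ s : Finset ℕ in atTop, 0 < ∑ i ∈ s, C i := by
  intro hev
  refine not_ev_neg (C := fun t => -C t) h ?_
  filter_upwards [hev] with s hs
  have : ∑ i ∈ s, -C i = -∑ i ∈ s, C i := by
    rw [Finset.sum_neg_distrib]
  rw [this]
  linarith

lemma not_summable_coe {C : ℕ → ℝ} (hp : ¬ Summable (fun t => max (C t) 0))
    (hm : ¬ Summable (fun t => max (-C t) 0)) :
    ¬ Summable (fun t => ((C t : ℝ) : EReal)) := by
  rintro ⟨X, hX⟩
  rw [HasSum] at hX
  have hcoe : (fun s : Finset ℕ => ∑ i ∈ s, ((C i : ℝ) : EReal)) =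
      fun s : Finset ℕ => ((∑ i ∈ s, C i : ℝ) : EReal) :=
    funext fun s => (coe_sum s C).symm
  rw [hcoe] at hX
  induction X using EReal.rec with
  | bot =>
    have hev := (EReal.tendsto_nhds_bot_iff_real.1 hX) 0
    refine not_ev_neg hp ?_
    filter_upwards [hev] with s hs
    exact_mod_cast hs
  | coe r =>
    have hr : Tendsto (fun s : Finset ℕ => ∑ i ∈ s, C i) atTop (𝓝 r) :=
      EReal.tendsto_coe.1 hX
    have hsC : Summable C := ⟨r, hr⟩
    exact hp (Summable.of_nonneg_of_le (fun t => le_max_right _ _)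
      (fun t => max_le (le_abs_self _) (abs_nonneg _)) hsC.abs)
  | top =>
    have hev := (EReal.tendsto_nhds_top_iff_real.1 hX) 0
    refine not_ev_pos hm ?_
    filter_upwards [hev] with s hs
    exact_mod_cast hs

/-- Monotonicity of `tsum` for `EReal`-valued sequences that never take the value `⊤`. -/
lemma ereal_tsum_le {a b : ℕ → EReal} (hab : ∀ t, a t ≤ b t) (hbt : ∀ t, b t ≠ ⊤) :
    ∑' t, a t ≤ ∑' t, b t := by
  by_cases habot : ∃ t, a t = ⊥
  · obtain ⟨t, ht⟩ := habot
    rw [tsum_eq_bot t ht]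
    exact bot_le
  push_neg at habot
  have hat : ∀ t, a t ≠ ⊤ := fun t h => hbt t (top_le_iff.1 (h ▸ hab t))
  have hbb : ∀ t, b t ≠ ⊥ := fun t h => habot t (le_bot_iff.1 (h ▸ hab t))
  set A : ℕ → ℝ := fun t => (a t).toReal with hAdef
  set B : ℕ → ℝ := fun t => (b t).toReal with hBdef
  have hAB : ∀ t, A t ≤ B t := fun t =>
    EReal.toReal_le_toReal (hab t) (habot t) (hbt t)
  have haA : a = fun t => ((A t : ℝ) : EReal) :=
    funext fun t => (EReal.coe_toReal (hat t) (habot t)).symm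
  have hbB : b = fun t => ((B t : ℝ) : EReal) :=
    funext fun t => (EReal.coe_toReal (hbt t) (hbb t)).symm
  rw [haA, hbB]
  by_cases hSA : Summable A
  · by_cases hSB : Summable B
    · rw [(hasSum_coe hSA.hasSum).tsum_eq, (hasSum_coe hSB.hasSum).tsum_eq]
      exact_mod_cast Summable.tsum_le_tsum hAB hSA hSB
    · have hD0 : ∀ t, 0 ≤ B t - A t := fun t => sub_nonneg.2 (hAB t)
      have hDns : ¬ Summable (fun t => B t - A t) := fun h => hSB (by simpa using h.add hSA)
      have htop : Tendsto (fun s : Finset ℕ => ∑ i ∈ s, B i) atTop atTop := by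
        have h1 : Tendsto (fun s : Finset ℕ => ∑ i ∈ s, A i) atTop (𝓝 (∑' i, A i)) :=
          hSA.hasSum
        have h2 := tendsto_sum_atTop hD0 hDns
        have h3 := Filter.Tendsto.add_atTop h1 h2
        refine h3.congr fun s => ?_
        rw [← Finset.sum_add_distrib]
        exact Finset.sum_congr rfl fun i _ => by ring
      rw [(hasSum_coe_top htop).tsum_eq]
      exact le_top
  · by_cases hSAp : Summable (fun t => max (A t) 0)
    · have hSAm : ¬ Summable (fun t => max (-A t) 0) := fun h => hSA (by
        have := hSAp.sub h
        simpa only [pos_sub_neg] using this)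
      have hbot : Tendsto (fun s : Finset ℕ => ∑ i ∈ s, A i) atTop atBot := by
        have h1 : Tendsto (fun s : Finset ℕ => ∑ i ∈ s, max (A i) 0) atTop
            (𝓝 (∑' i, max (A i) 0)) := hSAp.hasSum
        have h2 := tendsto_sum_atTop (fun t : ℕ => le_max_right (-A t) 0) hSAm
        have h2' : Tendsto (fun s : Finset ℕ => -∑ i ∈ s, max (-A i) 0) atTop atBot :=
          tendsto_neg_atBot_iff.2 h2
        have h3 := Filter.Tendsto.add_atBot h1 h2'
        refine h3.congr fun s => ?_
        rw [← Finset.sum_neg_distrib, ← Finset.sum_add_distrib]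
        refine Finset.sum_congr rfl fun i _ => ?_
        have := pos_sub_neg (A i)
        linarith
      rw [(hasSum_coe_bot hbot).tsum_eq]
      exact bot_le
    · have hSBp : ¬ Summable (fun t => max (B t) 0) := fun h => hSAp
        (Summable.of_nonneg_of_le (fun t => le_max_right _ _)
          (fun t => max_le_max (hAB t) le_rfl) h)
      by_cases hSBm : Summable (fun t => max (-B t) 0)
      · have htop : Tendsto (fun s : Finset ℕ => ∑ i ∈ s, B i) atTop atTop := by
          have h1 : Tendsto (fun s : Finset ℕ => ∑ i ∈ s, max (-B i) 0) atTop
              (𝓝 (∑' i, max (-B i) 0)) := hSBm.hasSum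
          have h1' : Tendsto (fun s : Finset ℕ => -∑ i ∈ s, max (-B i) 0) atTop
              (𝓝 (-(∑' i, max (-B i) 0))) := h1.neg
          have h2 := tendsto_sum_atTop (fun t : ℕ => le_max_right (B t) 0) hSBp
          have h3 := Filter.Tendsto.add_atTop h1' h2
          refine h3.congr fun s => ?_
          rw [← Finset.sum_neg_distrib, ← Finset.sum_add_distrib]
          refine Finset.sum_congr rfl fun i _ => ?_
          have := pos_sub_neg (B i)
          linarith
        rw [(hasSum_coe_top htop).tsum_eq]
        exact le_top
      · have hSAm : ¬ Summable (fun t => max (-A t) 0) := fun h => hSBm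
          (Summable.of_nonneg_of_le (fun t => le_max_right _ _)
            (fun t => max_le_max (neg_le_neg (hAB t)) le_rfl) h)
        rw [tsum_eq_zero_of_not_summable (not_summable_coe hSAp hSAm),
            tsum_eq_zero_of_not_summable (not_summable_coe hSBp hSBm)]

lemma between_aux (u v w : ℝ) :
    (0 ≤ u ⊔ v - u ⊔ w ∧ u ⊔ v - u ⊔ w ≤ v - w) ∨
      (v - w ≤ u ⊔ v - u ⊔ w ∧ u ⊔ v - u ⊔ w ≤ 0) := by
  rcases le_total w v with h | h
  · left
    refine ⟨sub_nonneg.2 (sup_le_sup_left h u), ?_⟩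
    rcases le_total u w with h2 | h2
    · rw [max_eq_right h2, max_eq_right (h2.trans h)]
    · rw [max_eq_left h2]
      rcases le_total u v with h1 | h1
      · rw [max_eq_right h1]; linarith
      · rw [max_eq_left h1]; linarith
  · right
    refine ⟨?_, sub_nonpos.2 (sup_le_sup_left h u)⟩
    rcases le_total u v with h1 | h1
    · rw [max_eq_right h1, max_eq_right (h1.trans h)]
    · rw [max_eq_left h1]
      rcases le_total u w with h2 | h2
      · rw [max_eq_right h2]; linarith
      · rw [max_eq_left h2]; linarith

end LeChatelierAux

open LeChatelierAux Filter Topology in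
/-- key step for the dynamic le Chatelier principle: the
coordinatewise join of an optimal path with the initial optimum is optimal. -/
theorem dynamic_le_chatelier_key_step {n : ℕ} {Θ : Type*} [PartialOrder Θ]
    (L : Set (Vec n)) (hL : SublatticeSet L)
    (δ : ℝ) (hδ0 : 0 < δ) (hδ1 : δ < 1)
    (F : Vec n → Θ → ℝ) (Cs : ℕ → Vec n → EReal)
    (hQS : ∀ θ : Θ, QSupermodOn L (fun x => F x θ))
    (hSCD : SCDOn L F)
    (hC0 : ∀ t e, 0 ≤ Cs t e) (hCfin : ∀ t, Cs t 0 < ⊤)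
    (hCmono : ∀ t, MonoCostOn L (Cs t))
    (θlo : Θ) (θs : ℕ → Θ) (hθs : ∀ t, θlo ≤ θs t)
    (xlo : Vec n) (hxloL : xlo ∈ L) (hxlo : ∀ x ∈ L, F x θlo ≤ F xlo θlo)
    (x : ℕ → Vec n) (hx0 : x 0 = xlo) (hxL : ∀ t, x (t + 1) ∈ L)
    (hopt : ∀ y : ℕ → Vec n, y 0 = xlo → (∀ t, y (t + 1) ∈ L) →
      Gobj δ F θs Cs y ≤ Gobj δ F θs Cs x) :
    (fun t => xlo ⊔ x t) 0 = xlo ∧ (∀ t, xlo ⊔ x (t + 1) ∈ L) ∧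
      ∀ y : ℕ → Vec n, y 0 = xlo → (∀ t, y (t + 1) ∈ L) →
        Gobj δ F θs Cs y ≤ Gobj δ F θs Cs (fun t => xlo ⊔ x t) := by
  have hxtL : ∀ t, x t ∈ L := by
    intro t
    cases t with
    | zero => rw [hx0]; exact hxloL
    | succ t => exact hxL t
  have hx'L : ∀ t, xlo ⊔ x t ∈ L := by
    intro t
    cases t with
    | zero => rw [hx0, sup_idem]; exact hxloL
    | succ t => exact (hL hxloL (hxL t)).1
  refine ⟨by simp [hx0], fun t => (hL hxloL (hxL t)).1, ?_⟩
  intro y hy0 hyL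
  refine (hopt y hy0 hyL).trans ?_
  simp only [Gobj]
  refine ereal_tsum_le (fun t => ?_) (fun t => ?_)
  · -- termwise inequality
    refine mul_le_mul_of_nonneg_left ?_ (EReal.coe_nonneg.2 (pow_nonneg hδ0.le t))
    -- F part
    have hz := hxL t
    have hsupL := (hL hxloL hz).1
    have hinfL := (hL hxloL hz).2
    have h1 : F (xlo ⊓ x (t + 1)) θlo ≤ F xlo θlo := hxlo _ hinfL
    have h2 : F (x (t + 1)) θlo ≤ F (xlo ⊔ x (t + 1)) θlo := ((hQS θlo) hxloL hz).1 h1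
    have hF : F (x (t + 1)) (θs t) ≤ F (xlo ⊔ x (t + 1)) (θs t) :=
      (hSCD hz hsupL le_sup_right (hθs t)).1 h2
    -- cost part
    have he' : (xlo ⊔ x (t + 1)) - (xlo ⊔ x t) ∈ DeltaSet L :=
      ⟨_, hx'L (t + 1), _, hx'L t, rfl⟩
    have he : x (t + 1) - x t ∈ DeltaSet L := ⟨_, hxtL (t + 1), _, hxtL t, rfl⟩
    have hbet : BetweenZero ((xlo ⊔ x (t + 1)) - (xlo ⊔ x t)) (x (t + 1) - x t) := by
      intro i
      have := between_aux (xlo i) (x (t + 1) i) (x t i)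
      simpa [Pi.sub_apply, Pi.sup_apply] using this
    have hC : Cs t ((xlo ⊔ x (t + 1)) - (xlo ⊔ x t)) ≤ Cs t (x (t + 1) - x t) :=
      hCmono t he' he hbet
    exact EReal.sub_le_sub (EReal.coe_le_coe_iff.2 hF) hC
  · -- no term is ⊤
    have hCb : Cs t ((xlo ⊔ x (t + 1)) - (xlo ⊔ x t)) ≠ ⊥ := by
      intro h
      have := hC0 t ((xlo ⊔ x (t + 1)) - (xlo ⊔ x t))
      rw [h] at this
      exact absurd this (by simp)
    generalize Cs t ((xlo ⊔ x (t + 1)) - (xlo ⊔ x t)) = c at hCb ⊢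
    induction c using EReal.rec with
    | bot => exact absurd rfl hCb
    | coe s =>
      rw [← EReal.coe_sub, ← EReal.coe_mul]
      exact EReal.coe_ne_top _
    | top =>
      rw [EReal.sub_top, EReal.coe_mul_bot_of_pos (pow_pos hδ0 t)]
      exact bot_ne_top
end
end

section
/- (One-dimensional cost inequality) Let C : ℝ → [0,∞] be single-dipped and minimized at 0. Then for all real x, y, z: C(y∨z − x∨y) + C(y∧z − x∧y) ≤ C(y − x) + C(z − y). -/
open scoped ENNReal

noncomputable section

/-- `ψ : ℝ → [0,∞]` is single-dipped. -/
def SingleDipped (ψ : ℝ → ℝ≥0∞) : Prop :=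
  ∃ m : ℝ, (∀ a b : ℝ, a ≤ b → b ≤ m → ψ b ≤ ψ a) ∧ (∀ a b : ℝ, m ≤ a → a ≤ b → ψ a ≤ ψ b)

lemma singleDipped_mid (C : ℝ → ℝ≥0∞) (hdip : SingleDipped C) {a t b : ℝ}
    (h1 : a ≤ t) (h2 : t ≤ b) : C t ≤ C a ∨ C t ≤ C b := by
  obtain ⟨m, hd, hi⟩ := hdip
  rcases le_total t m with h | h
  · exact Or.inl (hd a t h1 h)
  · exact Or.inr (hi t b h h2)

/-- the one-dimensional cost inequality used in the proof of the
strong dynamic le Chatelier principle. -/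
theorem one_dim_cost_inequality (C : ℝ → ℝ≥0∞)
    (hdip : SingleDipped C) (hmin : ∀ t : ℝ, C 0 ≤ C t) (x y z : ℝ) :
    C (max y z - max x y) + C (min y z - min x y) ≤ C (y - x) + C (z - y) := by
  rcases le_total x y with hxy | hxy <;> rcases le_total y z with hyz | hyz
  · rw [max_eq_right hyz, max_eq_right hxy, min_eq_left hyz, min_eq_left hxy, add_comm]
  · -- x ≤ y, z ≤ y : y is greatest
    rw [max_eq_left hyz, max_eq_right hxy, min_eq_right hyz, min_eq_left hxy, sub_self]
    have := singleDipped_mid C hdip (a := z - y) (t := z - x) (b := y - x)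
      (by linarith) (by linarith)
    rcases this with h | h
    · exact add_le_add (hmin _) h
    · rw [add_comm (C 0)]; exact add_le_add h (hmin _)
  · -- y ≤ x, y ≤ z : y is least
    rw [max_eq_right hyz, max_eq_left hxy, min_eq_left hyz, min_eq_right hxy, sub_self]
    have := singleDipped_mid C hdip (a := y - x) (t := z - x) (b := z - y)
      (by linarith) (by linarith)
    rcases this with h | h
    · exact add_le_add h (hmin _)
    · rw [add_comm (C (z - x))]; exact add_le_add (hmin _) h
  · rw [max_eq_left hyz, max_eq_left hxy, min_eq_right hyz, min_eq_right hxy]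
end
end

section
/- (Short-lived dynamic le Chatelier, bounded part) Let L be a sublattice of ℝⁿ, F quasi-supermodular in x with single-crossing differences in (x,θ), each C_t monotone, and suppose argmax_{x∈L} [F(x,θ_t) − C_t(x−y)] is nonempty for every t and y ∈ L. Fix θ̲ ≤ θ̄, x₀ = x̲ ∈ argmax_{x∈L} F(x,θ̲), x̄ ∈ argmax_{x∈L} F(x,θ̄) with x̄ ≥ x̲, and θ̲ ≤ θ_t ≤ θ̄ for all t. Then there exists a sequence (x_t)_{t≥1} with x_t ∈ argmax_{x∈L} [F(x,θ_t) − C_t(x−x_{t−1})] and x̲ ≤ x_t ≤ x̄ for every t ∈ ℕ. -/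
noncomputable section

/-- Theorem 5, first part: short-lived dynamic le Chatelier,
bounded equilibrium path. `θs t` and `Cs t` are the parameter and cost of
period `t+1`; `x 0 = x̲` is the initial choice. -/
theorem short_lived_le_chatelier_bounded {n : ℕ} {Θ : Type*} [PartialOrder Θ]
    (L : Set (Vec n)) (hL : SublatticeSet L)
    (F : Vec n → Θ → ℝ) (Cs : ℕ → Vec n → EReal)
    (hQS : ∀ θ : Θ, QSupermodOn L (fun x => F x θ))
    (hSCD : SCDOn L F)
    (hC0 : ∀ t e, 0 ≤ Cs t e) (hCfin : ∀ t, Cs t 0 < ⊤)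
    (hCmono : ∀ t, MonoCostOn L (Cs t))
    (θlo θhi : Θ) (hθ : θlo ≤ θhi)
    (θs : ℕ → Θ) (hθs : ∀ t, θlo ≤ θs t ∧ θs t ≤ θhi)
    (hne : ∀ t, ∀ y ∈ L, ∃ z ∈ L, ∀ w ∈ L,
      (F w (θs t) : EReal) - Cs t (w - y) ≤ (F z (θs t) : EReal) - Cs t (z - y))
    (xlo : Vec n) (hxloL : xlo ∈ L) (hxlo : ∀ x ∈ L, F x θlo ≤ F xlo θlo)
    (xbar : Vec n) (hxbarL : xbar ∈ L) (hxbar : ∀ x ∈ L, F x θhi ≤ F xbar θhi)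
    (hle : xlo ≤ xbar) :
    ∃ x : ℕ → Vec n, x 0 = xlo ∧
      ∀ t, x (t + 1) ∈ L ∧
        (∀ w ∈ L, (F w (θs t) : EReal) - Cs t (w - x t)
          ≤ (F (x (t + 1)) (θs t) : EReal) - Cs t (x (t + 1) - x t)) ∧
        xlo ≤ x (t + 1) ∧ x (t + 1) ≤ xbar := by
  have key : ∀ t, ∀ y : Vec n, y ∈ L → xlo ≤ y → y ≤ xbar →
      ∃ z, z ∈ L ∧ xlo ≤ z ∧ z ≤ xbar ∧ ∀ w ∈ L,
        (F w (θs t) : EReal) - Cs t (w - y) ≤ (F z (θs t) : EReal) - Cs t (z - y) := by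
    intro t y hyL hylo hyhi
    obtain ⟨z, hzL, hzmax⟩ := hne t y hyL
    set θt := θs t with hθt
    -- Step 1 : z ⊓ xbar is also a maximizer
    have hsupL : z ⊔ xbar ∈ L := (hL hzL hxbarL).1
    have hinfL : z ⊓ xbar ∈ L := (hL hzL hxbarL).2
    have h1 : F z θt ≤ F (z ⊓ xbar) θt := by
      by_contra h
      push_neg at h
      have h2 : F xbar θt < F (z ⊔ xbar) θt := (hQS θt hzL hxbarL).2 h
      have h3 : F xbar θhi < F (z ⊔ xbar) θhi :=
        (hSCD hxbarL hsupL le_sup_right (hθs t).2).2 h2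
      exact absurd (hxbar _ hsupL) (not_le.mpr h3)
    have hcost1 : Cs t (z ⊓ xbar - y) ≤ Cs t (z - y) := by
      refine hCmono t ⟨z ⊓ xbar, hinfL, y, hyL, rfl⟩ ⟨z, hzL, y, hyL, rfl⟩ ?_
      intro i
      rcases le_total (z i) (xbar i) with hc | hc
      · have he : (z ⊓ xbar - y) i = (z - y) i := by
          simp [Pi.inf_apply, Pi.sub_apply, min_eq_left hc]
        rcases le_total 0 ((z - y) i) with h0 | h0
        · exact Or.inl ⟨he ▸ h0, he ▸ le_refl _⟩
        · exact Or.inr ⟨he ▸ le_refl _, he ▸ h0⟩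
      · left
        have he : (z ⊓ xbar - y) i = xbar i - y i := by
          simp [Pi.inf_apply, Pi.sub_apply, min_eq_right hc]
        constructor
        · rw [he]; linarith [hyhi i]
        · rw [he]; simp only [Pi.sub_apply]; linarith
    have hmax1 : ∀ w ∈ L, (F w θt : EReal) - Cs t (w - y)
        ≤ (F (z ⊓ xbar) θt : EReal) - Cs t (z ⊓ xbar - y) := by
      intro w hw
      exact le_trans (hzmax w hw)
        (EReal.sub_le_sub (EReal.coe_le_coe_iff.mpr h1) hcost1)
    set z₁ := z ⊓ xbar with hz₁
    have hz₁hi : z₁ ≤ xbar := inf_le_right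
    -- Step 2 : xlo ⊔ z₁ is also a maximizer
    have hsupL' : xlo ⊔ z₁ ∈ L := (hL hxloL hinfL).1
    have hinfL' : xlo ⊓ z₁ ∈ L := (hL hxloL hinfL).2
    have hpre : F (xlo ⊓ z₁) θlo ≤ F xlo θlo := hxlo _ hinfL'
    have hpre' : F (xlo ⊓ z₁) θt ≤ F xlo θt :=
      (hSCD hinfL' hxloL inf_le_left (hθs t).1).1 hpre
    have h1' : F z₁ θt ≤ F (xlo ⊔ z₁) θt := (hQS θt hxloL hinfL).1 hpre'
    have hcost2 : Cs t (xlo ⊔ z₁ - y) ≤ Cs t (z₁ - y) := by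
      refine hCmono t ⟨xlo ⊔ z₁, hsupL', y, hyL, rfl⟩ ⟨z₁, hinfL, y, hyL, rfl⟩ ?_
      intro i
      rcases le_total (xlo i) (z₁ i) with hc | hc
      · have he : (xlo ⊔ z₁ - y) i = (z₁ - y) i := by
          simp [Pi.sup_apply, Pi.sub_apply, max_eq_right hc]
        rcases le_total 0 ((z₁ - y) i) with h0 | h0
        · exact Or.inl ⟨he ▸ h0, he ▸ le_refl _⟩
        · exact Or.inr ⟨he ▸ le_refl _, he ▸ h0⟩
      · right
        have he : (xlo ⊔ z₁ - y) i = xlo i - y i := by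
          simp [Pi.sup_apply, Pi.sub_apply, max_eq_left hc]
        constructor
        · rw [he]; simp only [Pi.sub_apply]; linarith
        · rw [he]; linarith [hylo i]
    refine ⟨xlo ⊔ z₁, hsupL', le_sup_left, sup_le hle hz₁hi, fun w hw => ?_⟩
    exact le_trans (hmax1 w hw)
      (EReal.sub_le_sub (EReal.coe_le_coe_iff.mpr h1') hcost2)
  choose! Z hZL hZlo hZhi hZmax using key
  set x : ℕ → Vec n := fun t => Nat.rec xlo (fun t xt => Z t xt) t with hxdef
  have hstep : ∀ t, x (t + 1) = Z t (x t) := fun t => rfl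
  have hinv : ∀ t, x t ∈ L ∧ xlo ≤ x t ∧ x t ≤ xbar := by
    intro t
    induction t with
    | zero => exact ⟨hxloL, le_refl _, hle⟩
    | succ t ih =>
      rw [hstep t]
      exact ⟨hZL t (x t) ih.1 ih.2.1 ih.2.2, hZlo t (x t) ih.1 ih.2.1 ih.2.2,
        hZhi t (x t) ih.1 ih.2.1 ih.2.2⟩
  refine ⟨x, rfl, fun t => ?_⟩
  obtain ⟨hL', hlo', hhi'⟩ := hinv t
  refine ⟨(hinv (t + 1)).1, ?_, (hinv (t + 1)).2.1, (hinv (t + 1)).2.2⟩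
  rw [hstep t]
  exact hZmax t (x t) hL' hlo' hhi'
end
end

section
/- (Short-lived dynamic le Chatelier, monotone part) Under the same setup, if additionally the parameter sequence is increasing (θ̲ ≤ θ_t ≤ θ_{t+1} ≤ θ̄ for every t), then there exists an equilibrium sequence (x_t)_{t≥1} with x_t ∈ argmax_{x∈L} [F(x,θ_t) − C_t(x−x_{t−1})] and x̲ ≤ x_t ≤ x_{t+1} ≤ x̄ for every t ∈ ℕ (with x₀ = x̲). -/
noncomputable section

private lemma deltaMem {n : ℕ} {L : Set (Vec n)} {a b : Vec n} (ha : a ∈ L) (hb : b ∈ L) :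
    a - b ∈ DeltaSet L := ⟨a, ha, b, hb, rfl⟩

private lemma ereal_sub_le_sub' {a b : ℝ} (hab : a ≤ b) {c d : EReal} (hdc : d ≤ c) :
    (a : EReal) - c ≤ (b : EReal) - d :=
  EReal.sub_le_sub (EReal.coe_le_coe_iff.2 hab) hdc

private lemma ereal_cancel {a b r : ℝ} (h : (a : EReal) - (r : EReal) ≤ (b : EReal) - r) :
    a ≤ b := by
  rw [← EReal.coe_sub, ← EReal.coe_sub, EReal.coe_le_coe_iff] at h; linarith

private lemma ereal_fin {c : EReal} (h0 : 0 ≤ c) (ht : c ≠ ⊤) : ∃ r : ℝ, c = r := by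
  lift c to ℝ using ⟨ht, fun hb => by simp [hb] at h0⟩; exact ⟨c, rfl⟩

private lemma step_lemma {n : ℕ} {Θ : Type*} [PartialOrder Θ]
    {L : Set (Vec n)} (hL : SublatticeSet L)
    {F : Vec n → Θ → ℝ} {C : Vec n → EReal}
    (hQS : ∀ θ : Θ, QSupermodOn L (fun x => F x θ))
    (hSCD : SCDOn L F)
    (hC0 : ∀ e, 0 ≤ C e) (hCfin : C 0 < ⊤)
    (hCmono : MonoCostOn L C)
    {θ θhi : Θ} (hθ : θ ≤ θhi)
    {xbar : Vec n} (hxbarL : xbar ∈ L) (hxbar : ∀ x ∈ L, F x θhi ≤ F xbar θhi)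
    {y : Vec n} (hyL : y ∈ L) (hyb : y ≤ xbar)
    (hP : ∀ w ∈ L, F (y ⊓ w) θ ≤ F y θ)
    (hz : ∃ z ∈ L, ∀ w ∈ L, (F w θ : EReal) - C (w - y) ≤ (F z θ : EReal) - C (z - y)) :
    ∃ x', x' ∈ L ∧
      (∀ w ∈ L, (F w θ : EReal) - C (w - y) ≤ (F x' θ : EReal) - C (x' - y)) ∧
      y ≤ x' ∧ x' ≤ xbar ∧ (∀ w ∈ L, F (x' ⊓ w) θ ≤ F x' θ) := by
  obtain ⟨z, hzL, hzmax⟩ := hz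
  have hGy : (F y θ : EReal) - C (y - y) ≠ ⊥ := by
    obtain ⟨r0, hr0⟩ := ereal_fin (hC0 0) hCfin.ne
    rw [sub_self, hr0, ← EReal.coe_sub]; exact EReal.coe_ne_bot _
  -- the optimal cost is finite
  have hcz_ne : C (z - y) ≠ ⊤ := by
    intro h
    have h2 := hzmax y hyL
    rw [h, EReal.sub_top, le_bot_iff] at h2
    exact hGy h2
  -- z₂ := z ⊓ xbar is also a maximizer
  set z₂ := z ⊓ xbar with hz₂def
  have hz₂L : z₂ ∈ L := (hL hzL hxbarL).2
  have hz₂b : z₂ ≤ xbar := inf_le_right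
  have hFz2hi : F z θhi ≤ F z₂ θhi := by
    by_contra h
    push_neg at h
    exact absurd (hxbar _ (hL hzL hxbarL).1) (not_le.2 ((hQS θhi hzL hxbarL).2 h))
  have hFz2 : F z θ ≤ F z₂ θ := by
    by_contra h
    push_neg at h
    exact absurd hFz2hi (not_le.2 ((hSCD hz₂L hzL inf_le_left hθ).2 h))
  have hbz2 : BetweenZero (z₂ - y) (z - y) := by
    intro i
    simp only [Pi.sub_apply, hz₂def, Pi.inf_apply]
    rcases le_total (z i) (xbar i) with h | h
    · rw [inf_of_le_left h]
      rcases le_total 0 (z i - y i) with h' | h'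
      · exact Or.inl ⟨h', le_rfl⟩
      · exact Or.inr ⟨le_rfl, h'⟩
    · rw [inf_of_le_right h]
      exact Or.inl ⟨sub_nonneg.2 (hyb i), by linarith⟩
  have hcb2 : C (z₂ - y) ≤ C (z - y) :=
    hCmono (deltaMem hz₂L hyL) (deltaMem hzL hyL) hbz2
  have hz₂max : ∀ w ∈ L, (F w θ : EReal) - C (w - y) ≤ (F z₂ θ : EReal) - C (z₂ - y) :=
    fun w hw => (hzmax w hw).trans (ereal_sub_le_sub' hFz2 hcb2)
  -- x' := z₂ ⊔ y is also a maximizer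
  set x' := z₂ ⊔ y with hx'def
  have hx'L : x' ∈ L := (hL hz₂L hyL).1
  have hyx' : y ≤ x' := le_sup_right
  have hx'b : x' ≤ xbar := sup_le hz₂b hyb
  have hFx' : F z₂ θ ≤ F x' θ := by
    have h1 := (hQS θ hyL hz₂L).1 (hP z₂ hz₂L)
    rwa [sup_comm y z₂] at h1
  have hxy : x' - y = (z₂ - y) ⊔ 0 := by
    funext i
    show (z₂ i ⊔ y i) - y i = (z₂ i - y i) ⊔ 0
    rcases le_total (z₂ i) (y i) with h | h
    · rw [sup_of_le_right h, sup_of_le_right (by linarith)]; linarith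
    · rw [sup_of_le_left h, sup_of_le_left (by linarith)]
  have hbx' : BetweenZero (x' - y) (z₂ - y) := by
    rw [hxy]
    intro i
    simp only [Pi.sup_apply, Pi.sub_apply, Pi.zero_apply]
    rcases le_total 0 (z₂ i - y i) with h | h
    · exact Or.inl ⟨le_sup_right, sup_le le_rfl h⟩
    · exact Or.inr ⟨le_sup_left, sup_le h le_rfl⟩
  have hcx' : C (x' - y) ≤ C (z₂ - y) :=
    hCmono (deltaMem hx'L hyL) (deltaMem hz₂L hyL) hbx'
  have hx'max : ∀ w ∈ L, (F w θ : EReal) - C (w - y) ≤ (F x' θ : EReal) - C (x' - y) :=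
    fun w hw => (hz₂max w hw).trans (ereal_sub_le_sub' hFx' hcx')
  have hcx_ne : C (x' - y) ≠ ⊤ := by
    intro h
    have h2 := hx'max y hyL
    rw [h, EReal.sub_top, le_bot_iff] at h2
    exact hGy h2
  obtain ⟨r, hr⟩ := ereal_fin (hC0 _) hcx_ne
  refine ⟨x', hx'L, hx'max, hyx', hx'b, ?_⟩
  intro w hw
  have hvL : w ⊔ y ∈ L := (hL hw hyL).1
  set u := x' ⊓ (w ⊔ y) with hudef
  have huL : u ∈ L := (hL hx'L hvL).2
  have hyu : y ≤ u := le_inf hyx' le_sup_right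
  have hub : BetweenZero (u - y) (x' - y) := by
    intro i
    exact Or.inl ⟨sub_nonneg.2 (hyu i), sub_le_sub_right (inf_le_left (a := x') (b := w ⊔ y) i) _⟩
  have hcu : C (u - y) ≤ C (x' - y) :=
    hCmono (deltaMem huL hyL) (deltaMem hx'L hyL) hub
  have hchain : (F u θ : EReal) - (r : EReal) ≤ (F x' θ : EReal) - r := by
    calc (F u θ : EReal) - (r : EReal) ≤ (F u θ : EReal) - C (u - y) :=
          ereal_sub_le_sub' le_rfl (hr ▸ hcu)
      _ ≤ (F x' θ : EReal) - C (x' - y) := hx'max u huL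
      _ = (F x' θ : EReal) - r := by rw [hr]
  have hFu : F u θ ≤ F x' θ := ereal_cancel hchain
  have hxwL : x' ⊓ w ∈ L := (hL hx'L hw).2
  have hinf : y ⊓ (x' ⊓ w) = y ⊓ w := by rw [← inf_assoc, inf_eq_left.2 hyx']
  have hsup : y ⊔ (x' ⊓ w) = u := by
    rw [sup_inf_left, sup_eq_right.2 hyx', hudef, sup_comm y w]
  have h2 := (hQS θ hyL hxwL).1
  rw [hinf, hsup] at h2
  exact (h2 (hP w hw)).trans hFu

/-- Theorem 5, second part: short-lived dynamic le Chatelier,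
monotone equilibrium path. `θs t` and `Cs t` are the parameter and cost of
period `t+1`; `x 0 = x̲` is the initial choice. -/
theorem short_lived_le_chatelier_monotone {n : ℕ} {Θ : Type*} [PartialOrder Θ]
    (L : Set (Vec n)) (hL : SublatticeSet L)
    (F : Vec n → Θ → ℝ) (Cs : ℕ → Vec n → EReal)
    (hQS : ∀ θ : Θ, QSupermodOn L (fun x => F x θ))
    (hSCD : SCDOn L F)
    (hC0 : ∀ t e, 0 ≤ Cs t e) (hCfin : ∀ t, Cs t 0 < ⊤)
    (hCmono : ∀ t, MonoCostOn L (Cs t))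
    (θlo θhi : Θ) (hθ : θlo ≤ θhi)
    (θs : ℕ → Θ) (hθs : ∀ t, θlo ≤ θs t ∧ θs t ≤ θhi)
    (hθinc : ∀ t, θs t ≤ θs (t + 1))
    (hne : ∀ t, ∀ y ∈ L, ∃ z ∈ L, ∀ w ∈ L,
      (F w (θs t) : EReal) - Cs t (w - y) ≤ (F z (θs t) : EReal) - Cs t (z - y))
    (xlo : Vec n) (hxloL : xlo ∈ L) (hxlo : ∀ x ∈ L, F x θlo ≤ F xlo θlo)
    (xbar : Vec n) (hxbarL : xbar ∈ L) (hxbar : ∀ x ∈ L, F x θhi ≤ F xbar θhi)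
    (hle : xlo ≤ xbar) :
    ∃ x : ℕ → Vec n, x 0 = xlo ∧
      ∀ t, x (t + 1) ∈ L ∧
        (∀ w ∈ L, (F w (θs t) : EReal) - Cs t (w - x t)
          ≤ (F (x (t + 1)) (θs t) : EReal) - Cs t (x (t + 1) - x t)) ∧
        x t ≤ x (t + 1) ∧ x (t + 1) ≤ xbar := by
  classical
  set P : ℕ → Vec n → Prop := fun t y =>
    y ∈ L ∧ y ≤ xbar ∧ ∀ w ∈ L, F (y ⊓ w) (θs t) ≤ F y (θs t) with hPdef
  have hbase : P 0 xlo := by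
    refine ⟨hxloL, hle, fun w hw => ?_⟩
    exact (hSCD (hL hxloL hw).2 hxloL inf_le_left (hθs 0).1).1 (hxlo _ (hL hxloL hw).2)
  have key : ∀ t (y : Vec n), P t y → ∃ x',
      (x' ∈ L ∧ (∀ w ∈ L, (F w (θs t) : EReal) - Cs t (w - y)
          ≤ (F x' (θs t) : EReal) - Cs t (x' - y)) ∧ y ≤ x' ∧ x' ≤ xbar) ∧ P (t + 1) x' := by
    intro t y hy
    obtain ⟨x', hx'L, hmax, hyx', hx'b, hPx⟩ :=
      step_lemma hL hQS hSCD (hC0 t) (hCfin t) (hCmono t) (hθs t).2 hxbarL hxbar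
        hy.1 hy.2.1 hy.2.2 (hne t y hy.1)
    refine ⟨x', ⟨hx'L, hmax, hyx', hx'b⟩, hx'L, hx'b, fun w hw => ?_⟩
    exact (hSCD (hL hx'L hw).2 hx'L inf_le_left (hθinc t)).1 (hPx w hw)
  let f : ∀ t : ℕ, {y : Vec n // P t y} := fun t =>
    Nat.rec ⟨xlo, hbase⟩
      (fun t ih => ⟨Classical.choose (key t ih.1 ih.2),
        (Classical.choose_spec (key t ih.1 ih.2)).2⟩) t
  refine ⟨fun t => (f t).1, rfl, fun t => ?_⟩
  exact (Classical.choose_spec (key t (f t).1 (f t).2)).1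
end
end

section
/- (Supermodularity of expected utility in the wishful-thinking model) Let 𝒴 = {y₁ < ⋯ < y_N} ⊆ ℝ₊ be finite, w > 0, r > 0, u₁, u₂ : ℝ → ℝ with u₂ concave. For c ∈ [0,w] and a CDF G on 𝒴, define U(c,G) = u₁(c) + Σ_y u₂((1+r)(w−c) + y) G({y}). Order CDFs by first-order stochastic dominance: G ≤₁ H iff G(y) ≥ H(y) for all y; let (G ∧₁ H)(y) = max{G(y),H(y)} and (G ∨₁ H)(y) = min{G(y),H(y)}. Then U is supermodular: U(c,G) − U(c∧c', G∧₁H) ≤ U(c∨c', G∨₁H) − U(c',H) for all c, c' ∈ [0,w] and CDFs G, H on 𝒴. -/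
noncomputable section

/-- The probability mass at index `i` of a distribution on an `(M+1)`-point grid,
given its cumulative function `Gc` (so `Gc i = Σ_{j ≤ i} mass j`). -/
def massOf {M : ℕ} (Gc : Fin (M + 1) → ℝ) (i : Fin (M + 1)) : ℝ :=
  if (i : ℕ) = 0 then Gc i
  else Gc i - Gc ⟨(i : ℕ) - 1, lt_of_le_of_lt (Nat.sub_le _ _) i.isLt⟩

/-- `Gc` is the cumulative function of a CDF on an `(M+1)`-point grid:
nondecreasing, nonnegative, with total mass `1`. -/
def IsCDF {M : ℕ} (Gc : Fin (M + 1) → ℝ) : Prop :=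
  Monotone Gc ∧ (∀ i, 0 ≤ Gc i) ∧ Gc (Fin.last M) = 1

/-- Expected lifetime utility `U(c, G) = u₁(c) + Σ_y u₂((1+r)(w−c)+y) G({y})`,
written in terms of the cumulative function `Gc` of the belief. -/
def Uutil (u₁ u₂ : ℝ → ℝ) (w r : ℝ) {M : ℕ} (y : Fin (M + 1) → ℝ)
    (c : ℝ) (Gc : Fin (M + 1) → ℝ) : ℝ :=
  u₁ c + ∑ i, u₂ ((1 + r) * (w - c) + y i) * massOf Gc i

/-- Concave functions have nonincreasing increments. -/
lemma concave_increment {u : ℝ → ℝ} (hu : ConcaveOn ℝ Set.univ u)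
    {x₁ x₂ d : ℝ} (h12 : x₁ ≤ x₂) (hd : 0 < d) :
    u (x₂ + d) - u x₂ ≤ u (x₁ + d) - u x₁ := by
  have hf : ConvexOn ℝ Set.univ (fun t => -u t) := hu.neg
  have h1 : ((-u (x₁+d)) - (-u x₁)) / ((x₁+d) - x₁)
      ≤ ((-u (x₂+d)) - (-u x₁)) / ((x₂+d) - x₁) :=
    hf.secant_mono (Set.mem_univ x₁) (Set.mem_univ _) (Set.mem_univ _)
      (by intro h; nlinarith) (by intro h; nlinarith) (by linarith)
  have h2 : ((-u x₁) - (-u (x₂+d))) / (x₁ - (x₂+d))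
      ≤ ((-u x₂) - (-u (x₂+d))) / (x₂ - (x₂+d)) :=
    hf.secant_mono (Set.mem_univ (x₂+d)) (Set.mem_univ _) (Set.mem_univ _)
      (by intro h; nlinarith) (by intro h; nlinarith) h12
  have e1 : ((-u x₁) - (-u (x₂+d))) / (x₁ - (x₂+d))
      = ((-u (x₂+d)) - (-u x₁)) / ((x₂+d) - x₁) := by
    rw [← neg_div_neg_eq]; ring_nf
  have e2 : ((-u x₂) - (-u (x₂+d))) / (x₂ - (x₂+d))
      = ((-u (x₂+d)) - (-u x₂)) / ((x₂+d) - x₂) := by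
    rw [← neg_div_neg_eq]; ring_nf
  rw [e1] at h2; rw [e2] at h2
  have h3 : ((-u (x₁+d)) - (-u x₁)) / d ≤ ((-u (x₂+d)) - (-u x₂)) / d := by
    have := h1.trans h2
    simpa using this
  have := (div_le_div_iff_of_pos_right hd).mp h3
  linarith

/-- Summation by parts for sums against probability masses. -/
lemma abel_sum (f g : ℕ → ℝ) (M : ℕ) :
    ∑ i ∈ Finset.range (M+1), f i * (if i = 0 then g i else g i - g (i-1))
      = f M * g M - ∑ i ∈ Finset.range M, (f (i+1) - f i) * g i := by
  induction M with
  | zero => simp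
  | succ M ih =>
      rw [Finset.sum_range_succ, ih, Finset.sum_range_succ]
      simp only [Nat.succ_ne_zero, if_false, Nat.add_sub_cancel]
      ring

/-- Extension of a function on `Fin (M+1)` to `ℕ` by capping at `M`. -/
def cumExt {M : ℕ} (F : Fin (M + 1) → ℝ) (n : ℕ) : ℝ :=
  F ⟨min n M, Nat.lt_succ_of_le (min_le_right n M)⟩

/-- Summation-by-parts representation of expected utility. -/
lemma Uutil_eq (u₁ u₂ : ℝ → ℝ) (w r : ℝ) {M : ℕ} (y : Fin (M + 1) → ℝ) (c : ℝ)
    (Gc : Fin (M + 1) → ℝ) (hlast : Gc (Fin.last M) = 1) :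
    Uutil u₁ u₂ w r y c Gc
      = u₁ c + u₂ ((1 + r) * (w - c) + cumExt y M)
        - ∑ i ∈ Finset.range M,
            (u₂ ((1 + r) * (w - c) + cumExt y (i+1)) - u₂ ((1 + r) * (w - c) + cumExt y i))
              * cumExt Gc i := by
  have h1 : ∑ i : Fin (M+1), u₂ ((1 + r) * (w - c) + y i) * massOf Gc i
      = ∑ i ∈ Finset.range (M+1), u₂ ((1 + r) * (w - c) + cumExt y i) *
          (if i = 0 then cumExt Gc i else cumExt Gc i - cumExt Gc (i-1)) := by
    rw [← Fin.sum_univ_eq_sum_range]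
    apply Finset.sum_congr rfl
    intro i _
    have hi : (i : ℕ) ≤ M := Nat.lt_succ_iff.mp i.isLt
    have hyi : cumExt y ↑i = y i := by
      unfold cumExt; congr 1; exact Fin.ext (by simpa using hi)
    have hGi : cumExt Gc ↑i = Gc i := by
      unfold cumExt; congr 1; exact Fin.ext (by simpa using hi)
    have hGp : cumExt Gc (↑i - 1)
        = Gc ⟨(i : ℕ) - 1, lt_of_le_of_lt (Nat.sub_le _ _) i.isLt⟩ := by
      unfold cumExt; congr 1; exact Fin.ext (show min ((i:ℕ)-1) M = (i:ℕ)-1 by omega)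
    rw [hyi, hGi, hGp, massOf]
  unfold Uutil
  rw [h1, abel_sum]
  have hGM : cumExt Gc M = 1 := by
    unfold cumExt; rw [show (⟨min M M, _⟩ : Fin (M+1)) = Fin.last M from Fin.ext (by simp)]
    exact hlast
  rw [hGM]; ring

/-- The pointwise supermodularity step. -/
lemma pointwise_step (A B g h : ℝ) (hAB : A ≤ B) :
    A * max g h + B * min g h ≤ A * g + B * h := by
  have h1 : min g h = g + h - max g h := by
    have := max_add_min g h; linarith
  rw [h1]
  nlinarith [mul_nonneg (sub_nonneg.mpr hAB) (sub_nonneg.mpr (le_max_left g h))]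

/-- Claim 1: supermodularity of expected utility in the
wishful-thinking model. Beliefs are ordered by first-order stochastic dominance
(`G ≤₁ H` iff `G(y) ≥ H(y)` pointwise in cumulative form); the FOSD meet of `G`
and `H` has cumulative `max (G ·) (H ·)` and the join has cumulative
`min (G ·) (H ·)`. -/
theorem wishful_thinking_supermodular (u₁ u₂ : ℝ → ℝ) (hu₂ : ConcaveOn ℝ Set.univ u₂)
    (w r : ℝ) (hw : 0 < w) (hr : 0 < r)
    {M : ℕ} (y : Fin (M + 1) → ℝ) (hy : StrictMono y) (hy0 : ∀ i, 0 ≤ y i)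
    (c c' : ℝ) (hc : c ∈ Set.Icc 0 w) (hc' : c' ∈ Set.Icc 0 w)
    (G H : Fin (M + 1) → ℝ) (hG : IsCDF G) (hH : IsCDF H) :
    Uutil u₁ u₂ w r y c G - Uutil u₁ u₂ w r y (min c c') (fun i => max (G i) (H i))
      ≤ Uutil u₁ u₂ w r y (max c c') (fun i => min (G i) (H i))
        - Uutil u₁ u₂ w r y c' H := by
  obtain ⟨hGm, hG0, hG1⟩ := hG
  obtain ⟨hHm, hH0, hH1⟩ := hH
  have hmax1 : (fun i => max (G i) (H i)) (Fin.last M) = 1 := by simp [hG1, hH1]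
  have hmin1 : (fun i => min (G i) (H i)) (Fin.last M) = 1 := by simp [hG1, hH1]
  -- monotonicity of increments in consumption
  have key : ∀ t t' : ℝ, t ≤ t' → ∀ i ∈ Finset.range M,
      u₂ ((1 + r) * (w - t) + cumExt y (i+1)) - u₂ ((1 + r) * (w - t) + cumExt y i)
        ≤ u₂ ((1 + r) * (w - t') + cumExt y (i+1)) - u₂ ((1 + r) * (w - t') + cumExt y i) := by
    intro t t' htt i hi
    have hiM : i < M := Finset.mem_range.mp hi
    have hd : 0 < cumExt y (i+1) - cumExt y i := by
      have : (⟨min i M, Nat.lt_succ_of_le (min_le_right i M)⟩ : Fin (M+1))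
          < ⟨min (i+1) M, Nat.lt_succ_of_le (min_le_right (i+1) M)⟩ := by
        rw [Fin.lt_def]; simp; omega
      have := hy this
      unfold cumExt
      linarith
    have h12 : (1 + r) * (w - t') + cumExt y i ≤ (1 + r) * (w - t) + cumExt y i := by
      nlinarith
    have := concave_increment hu₂ h12 hd
    have e1 : (1 + r) * (w - t) + cumExt y i + (cumExt y (i+1) - cumExt y i)
        = (1 + r) * (w - t) + cumExt y (i+1) := by ring
    have e2 : (1 + r) * (w - t') + cumExt y i + (cumExt y (i+1) - cumExt y i)
        = (1 + r) * (w - t') + cumExt y (i+1) := by ring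
    rw [e1, e2] at this
    linarith
  rw [Uutil_eq u₁ u₂ w r y c G hG1, Uutil_eq u₁ u₂ w r y c' H hH1,
      Uutil_eq u₁ u₂ w r y (min c c') _ hmax1, Uutil_eq u₁ u₂ w r y (max c c') _ hmin1]
  rcases le_total c c' with hcc | hcc
  · rw [min_eq_left hcc, max_eq_right hcc]
    have hsum :
        (∑ i ∈ Finset.range M,
            (u₂ ((1 + r) * (w - c) + cumExt y (i+1)) - u₂ ((1 + r) * (w - c) + cumExt y i))
              * cumExt (fun i => max (G i) (H i)) i)
          + (∑ i ∈ Finset.range M,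
            (u₂ ((1 + r) * (w - c') + cumExt y (i+1)) - u₂ ((1 + r) * (w - c') + cumExt y i))
              * cumExt (fun i => min (G i) (H i)) i)
        ≤ (∑ i ∈ Finset.range M,
            (u₂ ((1 + r) * (w - c) + cumExt y (i+1)) - u₂ ((1 + r) * (w - c) + cumExt y i))
              * cumExt G i)
          + (∑ i ∈ Finset.range M,
            (u₂ ((1 + r) * (w - c') + cumExt y (i+1)) - u₂ ((1 + r) * (w - c') + cumExt y i))
              * cumExt H i) := by
      rw [← Finset.sum_add_distrib, ← Finset.sum_add_distrib]
      apply Finset.sum_le_sum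
      intro i hi
      have hmx : cumExt (fun i => max (G i) (H i)) i = max (cumExt G i) (cumExt H i) := rfl
      have hmn : cumExt (fun i => min (G i) (H i)) i = min (cumExt G i) (cumExt H i) := rfl
      rw [hmx, hmn]
      exact pointwise_step _ _ _ _ (key c c' hcc i hi)
    linarith
  · rw [min_eq_right hcc, max_eq_left hcc]
    have hsum :
        (∑ i ∈ Finset.range M,
            (u₂ ((1 + r) * (w - c') + cumExt y (i+1)) - u₂ ((1 + r) * (w - c') + cumExt y i))
              * cumExt (fun i => max (G i) (H i)) i)
          + (∑ i ∈ Finset.range M,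
            (u₂ ((1 + r) * (w - c) + cumExt y (i+1)) - u₂ ((1 + r) * (w - c) + cumExt y i))
              * cumExt (fun i => min (G i) (H i)) i)
        ≤ (∑ i ∈ Finset.range M,
            (u₂ ((1 + r) * (w - c) + cumExt y (i+1)) - u₂ ((1 + r) * (w - c) + cumExt y i))
              * cumExt G i)
          + (∑ i ∈ Finset.range M,
            (u₂ ((1 + r) * (w - c') + cumExt y (i+1)) - u₂ ((1 + r) * (w - c') + cumExt y i))
              * cumExt H i) := by
      rw [← Finset.sum_add_distrib, ← Finset.sum_add_distrib]
      apply Finset.sum_le_sum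
      intro i hi
      have hmx : cumExt (fun i => max (G i) (H i)) i = max (cumExt H i) (cumExt G i) := by
        rw [show cumExt (fun i => max (G i) (H i)) i = max (cumExt G i) (cumExt H i) from rfl,
          max_comm]
      have hmn : cumExt (fun i => min (G i) (H i)) i = min (cumExt H i) (cumExt G i) := by
        rw [show cumExt (fun i => min (G i) (H i)) i = min (cumExt G i) (cumExt H i) from rfl,
          min_comm]
      rw [hmx, hmn]
      have := pointwise_step _ _ (cumExt H i) (cumExt G i) (key c' c hcc i hi)
      linarith
    linarith
end
end
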